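/- arXiv:2112.00573 — 9 statements merged into one kernel-verified Lean document; each statement's English description precedes it below -/
import Mathlib

section
/- For p ∈ [1 - q/(d+1), 1) ∩ (0,1), integers d ≥ 1, q ≥ 2, x = 1 is the unique solution of f(x) = x on [0,∞), where f(x) = ((p·x + (q-1))/(p + (q-2) + x))^d. -/
theorem f_unique_fixed_point (p : ℝ) (d q : ℕ) (hp0 : 0 < p) (hp1 : p < 1)
    (hpc : 1 - (q : ℝ) / ((d : ℝ) + 1) ≤ p)
    (hd : 1 ≤ d) (hq : 2 ≤ q)
    (f : ℝ → ℝ)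
    (hf : ∀ x : ℝ, f x = ((p * x + ((q : ℝ) - 1)) / (p + ((q : ℝ) - 2) + x)) ^ d) :
    ∀ x : ℝ, 0 ≤ x → (f x = x ↔ x = 1) := by
  have hq2 : (2:ℝ) ≤ (q:ℝ) := by exact_mod_cast hq
  have hden : ∀ x : ℝ, 0 ≤ x → 0 < p + ((q : ℝ) - 2) + x := by
    intro x hx; linarith
  have hnum : ∀ x : ℝ, 0 ≤ x → 0 < p * x + ((q:ℝ) - 1) := by
    intro x hx; nlinarith
  set g : ℝ → ℝ := fun x => (p * x + ((q : ℝ) - 1)) / (p + ((q : ℝ) - 2) + x) with hg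
  have hgpos : ∀ x, 0 ≤ x → 0 < g x := fun x hx => div_pos (hnum x hx) (hden x hx)
  have hmono : ∀ a b : ℝ, 0 ≤ a → 0 ≤ b → a < b → g b < g a := by
    intro a b ha hb hab
    rw [hg]
    simp only
    rw [div_lt_div_iff₀ (hden b hb) (hden a ha)]
    nlinarith [mul_pos (mul_pos (sub_pos.mpr hab) (by linarith : (0:ℝ) < 1 - p)) (by linarith : (0:ℝ) < p + (q:ℝ) - 1)]
  have hg1 : g 1 = 1 := by
    rw [hg]
    simp only
    rw [div_eq_one_iff_eq (by linarith [hden 1 zero_le_one] : p + ((q:ℝ)-2) + 1 ≠ 0)]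
    ring
  intro x hx
  constructor
  · intro hfx
    by_contra hne
    rcases lt_or_gt_of_ne hne with h1 | h1
    · have h2 : g 1 < g x := hmono x 1 hx zero_le_one h1
      have hgx : 1 < g x := by rwa [hg1] at h2
      have h3 : 1 < f x := by
        rw [hf x]
        calc (1:ℝ) = 1 ^ d := (one_pow d).symm
        _ < g x ^ d := by
            apply pow_lt_pow_left₀ hgx zero_le_one
            omega
      rw [hfx] at h3
      linarith
    · have h2 : g x < g 1 := hmono 1 x zero_le_one hx h1
      have hgx : g x < 1 := by rwa [hg1] at h2
      have h3 : f x < 1 := by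
        rw [hf x]
        calc g x ^ d < 1 ^ d := by
              apply pow_lt_pow_left₀ hgx (le_of_lt (hgpos x hx))
              omega
        _ = 1 := one_pow d
      rw [hfx] at h3
      linarith
  · intro h; subst h
    rw [hf 1]
    have h4 : p * 1 + ((q:ℝ)-1) = p + ((q:ℝ)-2) + 1 := by ring
    rw [h4, div_self (ne_of_gt (hden 1 zero_le_one)), one_pow]
end

section
/- For p ∈ [1 - q/(d+1), 1) ∩ (0,1), integers d ≥ 1, q ≥ 2, and every x ≥ 1, the function f(x) = ((p·x + (q-1))/(p + (q-2) + x))^d satisfies 1 - f(x) ≤ x - 1 (one-sided contraction). -/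
/-!
Writing `r = (p x + q - 1) / (p + q - 2 + x)`, one has `1 - r = (1 - p)(x - 1) / (p + q - 2 + x)`,
and Bernoulli's inequality gives `1 - r ^ d ≤ d (1 - r)`. The condition `p ≥ 1 - q / (d + 1)`
says `d (1 - p) ≤ q - 1 + p`, which is at most the denominator `p + q - 2 + x`, so
`d (1 - r) ≤ x - 1`.
-/

section

variable {K : Type*} [Field K]

lemma one_sub_div_eq_mul_sub_one_div {p q x : K} (hD : p + (q - 2) + x ≠ 0) :
    1 - (p * x + (q - 1)) / (p + (q - 2) + x) = (1 - p) * (x - 1) / (p + (q - 2) + x) := by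
  field_simp
  ring

variable [LinearOrder K] [IsStrictOrderedRing K]

lemma one_sub_pow_le_mul_one_sub {a : K} (ha : -1 ≤ a) (n : ℕ) : 1 - a ^ n ≤ n * (1 - a) := by
  linarith [one_add_mul_sub_le_pow ha n]

lemma mul_one_sub_div_le_sub_one {p q d x : K} (hD : 0 < p + (q - 2) + x) (hx : 1 ≤ x)
    (hpq : (1 - p) * (d + 1) ≤ q) :
    d * (1 - (p * x + (q - 1)) / (p + (q - 2) + x)) ≤ x - 1 := by
  rw [one_sub_div_eq_mul_sub_one_div hD.ne', mul_div_assoc', div_le_iff₀ hD]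
  nlinarith [mul_le_mul_of_nonneg_left hpq (sub_nonneg.2 hx)]

end

theorem f_one_sided_contraction_general (p : ℝ) (d q : ℕ) (hp0 : 0 < p)
    (hpc : 1 - (q : ℝ) / ((d : ℝ) + 1) ≤ p)
    (hq : 2 ≤ q)
    (f : ℝ → ℝ)
    (hf : ∀ x : ℝ, f x = ((p * x + ((q : ℝ) - 1)) / (p + ((q : ℝ) - 2) + x)) ^ d) :
    ∀ x : ℝ, 1 ≤ x → 1 - f x ≤ x - 1 := by
  intro x hx
  have hq2 : (2 : ℝ) ≤ q := by exact_mod_cast hq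
  have hD : 0 < p + ((q : ℝ) - 2) + x := by linarith
  have hpq : (1 - p) * ((d : ℝ) + 1) ≤ q := by
    rwa [sub_le_comm, le_div_iff₀ (by positivity)] at hpc
  have hr : 0 ≤ (p * x + ((q : ℝ) - 1)) / (p + ((q : ℝ) - 2) + x) :=
    div_nonneg (by nlinarith) hD.le
  rw [hf]
  exact (one_sub_pow_le_mul_one_sub (by linarith) d).trans (mul_one_sub_div_le_sub_one hD hx hpq)

theorem f_one_sided_contraction (p : ℝ) (d q : ℕ) (hp0 : 0 < p) (hp1 : p < 1)
    (hpc : 1 - (q : ℝ) / ((d : ℝ) + 1) ≤ p)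
    (hd : 1 ≤ d) (hq : 2 ≤ q)
    (f : ℝ → ℝ)
    (hf : ∀ x : ℝ, f x = ((p * x + ((q : ℝ) - 1)) / (p + ((q : ℝ) - 2) + x)) ^ d) :
    ∀ x : ℝ, 1 ≤ x → 1 - f x ≤ x - 1 :=
  f_one_sided_contraction_general p d q hp0 hpc hq f hf
end

section
/- At the critical value p_c = 1 - q/(d+1) > 0, the composition g = f ∘ f of f(x) = ((p_c·x + (q-1))/(p_c + (q-2) + x))^d satisfies g(1) = 1, g'(1) = 1, g''(1) = 0, and g'''(1) = -(d²-1)/d². -/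
noncomputable def auxH (p a b x : ℝ) : ℝ := (p * x + a) / (b + x)
noncomputable def auxF0 (p a b : ℝ) (d : ℕ) (x : ℝ) : ℝ := auxH p a b x ^ d
noncomputable def auxF1 (p a b c : ℝ) (d : ℕ) (x : ℝ) : ℝ :=
  (d : ℝ) * auxH p a b x ^ (d - 1) * (c / (b + x) ^ 2)
noncomputable def auxF2 (p a b c : ℝ) (d : ℕ) (x : ℝ) : ℝ :=
  (d : ℝ) * (((d - 1 : ℕ) : ℝ) * auxH p a b x ^ (d - 2) * (c / (b + x) ^ 2)) * (c / (b + x) ^ 2)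
    + (d : ℝ) * auxH p a b x ^ (d - 1) * (-2 * c / (b + x) ^ 3)
noncomputable def auxF3 (p a b c : ℝ) (d : ℕ) (x : ℝ) : ℝ :=
  ((d : ℝ) * (((d - 1 : ℕ) : ℝ) * (((d - 2 : ℕ) : ℝ) * auxH p a b x ^ (d - 3) * (c / (b + x) ^ 2))
        * (c / (b + x) ^ 2)
      + ((d - 1 : ℕ) : ℝ) * auxH p a b x ^ (d - 2) * (-2 * c / (b + x) ^ 3))) * (c / (b + x) ^ 2)
    + (d : ℝ) * (((d - 1 : ℕ) : ℝ) * auxH p a b x ^ (d - 2) * (c / (b + x) ^ 2)) * (-2 * c / (b + x) ^ 3)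
    + (((d : ℝ) * (((d - 1 : ℕ) : ℝ) * auxH p a b x ^ (d - 2) * (c / (b + x) ^ 2)) * (-2 * c / (b + x) ^ 3))
      + (d : ℝ) * auxH p a b x ^ (d - 1) * (6 * c / (b + x) ^ 4))

lemma hasDerivAt_auxH {p a b c x : ℝ} (hc : c = p * b - a) (hx : b + x ≠ 0) :
    HasDerivAt (auxH p a b) (c / (b + x) ^ 2) x := by
  have h1 : HasDerivAt (fun y : ℝ => p * y + a) p x := by
    simpa using ((hasDerivAt_id x).const_mul p).add_const a
  have h2 : HasDerivAt (fun y : ℝ => b + y) 1 x := by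
    simpa using (hasDerivAt_id x).const_add b
  have h := h1.div h2 hx
  refine h.congr_deriv ?_
  rw [hc]; ring

lemma hasDerivAt_auxK {b c x : ℝ} (hx : b + x ≠ 0) :
    HasDerivAt (fun y : ℝ => c / (b + y) ^ 2) (-2 * c / (b + x) ^ 3) x := by
  have h2 : HasDerivAt (fun y : ℝ => (b + y) ^ 2) (2 * (b + x)) x := by
    have := ((hasDerivAt_id x).const_add b).pow 2
    exact this.congr_deriv (by norm_num)
  have h := (hasDerivAt_const x c).div h2 (pow_ne_zero 2 hx)
  refine h.congr_deriv ?_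
  field_simp
  ring

lemma hasDerivAt_auxK3 {b c x : ℝ} (hx : b + x ≠ 0) :
    HasDerivAt (fun y : ℝ => -2 * c / (b + y) ^ 3) (6 * c / (b + x) ^ 4) x := by
  have h2 : HasDerivAt (fun y : ℝ => (b + y) ^ 3) (3 * (b + x) ^ 2) x := by
    have := ((hasDerivAt_id x).const_add b).pow 3
    exact this.congr_deriv (by norm_num)
  have h := (hasDerivAt_const x (-2 * c)).div h2 (pow_ne_zero 3 hx)
  refine h.congr_deriv ?_
  field_simp
  ring

lemma hasDerivAt_auxF0 {p a b c x : ℝ} {d : ℕ} (hc : c = p * b - a) (hx : b + x ≠ 0) :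
    HasDerivAt (auxF0 p a b d) (auxF1 p a b c d x) x := by
  have := (hasDerivAt_auxH hc hx).pow d
  exact this

lemma hasDerivAt_auxHpow {p a b c x : ℝ} {d k m : ℕ} (hc : c = p * b - a) (hx : b + x ≠ 0)
    (hkm : k - 1 = m) :
    HasDerivAt (fun y => auxH p a b y ^ k) ((k : ℝ) * auxH p a b x ^ m * (c / (b + x) ^ 2)) x := by
  have := (hasDerivAt_auxH hc hx).pow k
  rwa [hkm] at this

lemma hasDerivAt_auxF1 {p a b c x : ℝ} {d : ℕ} (hc : c = p * b - a) (hx : b + x ≠ 0) :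
    HasDerivAt (auxF1 p a b c d) (auxF2 p a b c d x) x := by
  have hpow := hasDerivAt_auxHpow (d := d) (k := d - 1) (m := d - 2) hc hx (by omega)
  have h := ((hpow.const_mul (d : ℝ)).mul (hasDerivAt_auxK (c := c) hx))
  exact h

lemma hasDerivAt_auxF2 {p a b c x : ℝ} {d : ℕ} (hc : c = p * b - a) (hx : b + x ≠ 0) :
    HasDerivAt (auxF2 p a b c d) (auxF3 p a b c d x) x := by
  have hpow1 := hasDerivAt_auxHpow (d := d) (k := d - 1) (m := d - 2) hc hx (by omega)
  have hpow2 := hasDerivAt_auxHpow (d := d) (k := d - 2) (m := d - 3) hc hx (by omega)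
  have hA : HasDerivAt (fun y => ((d - 1 : ℕ) : ℝ) * auxH p a b y ^ (d - 2) * (c / (b + y) ^ 2))
      (((d - 1 : ℕ) : ℝ) * (((d - 2 : ℕ) : ℝ) * auxH p a b x ^ (d - 3) * (c / (b + x) ^ 2))
          * (c / (b + x) ^ 2)
        + ((d - 1 : ℕ) : ℝ) * auxH p a b x ^ (d - 2) * (-2 * c / (b + x) ^ 3)) x :=
    (hpow2.const_mul _).mul (hasDerivAt_auxK (c := c) hx)
  have hterm1 := ((hA.const_mul (d : ℝ)).mul (hasDerivAt_auxK (c := c) hx))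
  have hterm2 := ((hpow1.const_mul (d : ℝ)).mul (hasDerivAt_auxK3 (c := c) hx))
  have h := hterm1.add hterm2
  exact h


lemma eval_Cd (p : ℝ) (d q : ℕ) (hp : p = 1 - (q : ℝ) / ((d : ℝ) + 1))
    (hd1 : (0:ℝ) < (d : ℝ) + 1) :
    (d : ℝ) * (p * (p + ((q : ℝ) - 2)) - ((q : ℝ) - 1)) = -((p + ((q : ℝ) - 2)) + 1) ^ 2 := by
  rw [hp]
  field_simp
  ring

lemma eval_F2 (p A B C : ℝ) (d : ℕ) (hH1 : auxH p A B 1 = 1)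
    (hdne : (d : ℝ) ≠ 0) (hD : B + 1 ≠ 0) (hCval : C = -(B + 1) ^ 2 / (d : ℝ))
    (e1 : ((d - 1 : ℕ) : ℝ) = (d : ℝ) - 1) :
    auxF2 p A B C d 1 = ((d : ℝ) - 1) / d + 2 / (B + 1) := by
  rw [auxF2, hH1, one_pow, one_pow, hCval, e1]
  field_simp

lemma eval_F3 (p A B C : ℝ) (d : ℕ) (hH1 : auxH p A B 1 = 1)
    (hdne : (d : ℝ) ≠ 0) (hD : B + 1 ≠ 0) (hCval : C = -(B + 1) ^ 2 / (d : ℝ))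
    (e1 : ((d - 1 : ℕ) : ℝ) = (d : ℝ) - 1) (e2 : ((d - 2 : ℕ) : ℝ) = (d : ℝ) - 2) :
    auxF3 p A B C d 1 =
      -(((d : ℝ) - 1) * ((d : ℝ) - 2)) / d ^ 2 - 6 * ((d : ℝ) - 1) / ((d : ℝ) * (B + 1))
        - 6 / (B + 1) ^ 2 := by
  rw [auxF3, hH1, one_pow, one_pow, one_pow, hCval, e1, e2]
  field_simp
  ring

lemma final_eval3 (dR D F2v F3v : ℝ) (hd : dR ≠ 0) (hD : D ≠ 0)
    (h2 : F2v = (dR - 1) / dR + 2 / D)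
    (h3 : F3v = -((dR - 1) * (dR - 2)) / dR ^ 2 - 6 * (dR - 1) / (dR * D) - 6 / D ^ 2) :
    (F3v * -1 * -1 + F2v * F2v) * -1 + F2v * -1 * F2v + (F2v * -1 * F2v + -1 * F3v)
      = -((dR ^ 2 - 1) / dR ^ 2) := by
  rw [h2, h3]
  field_simp
  ring

lemma final_eval2 (F2v : ℝ) : F2v * -1 * -1 + -1 * F2v = 0 := by ring

set_option maxHeartbeats 1600000 in
theorem ff_derivs_at_one (d q : ℕ) (hd : 2 ≤ d) (hq : 2 ≤ q)
    (hqd : (q : ℝ) < (d : ℝ) + 1)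
    (p : ℝ) (hp : p = 1 - (q : ℝ) / ((d : ℝ) + 1))
    (f g : ℝ → ℝ)
    (hf : ∀ x : ℝ, f x = ((p * x + ((q : ℝ) - 1)) / (p + ((q : ℝ) - 2) + x)) ^ d)
    (hg : g = f ∘ f) :
    g 1 = 1 ∧ deriv g 1 = 1 ∧ deriv (deriv g) 1 = 0 ∧
      deriv (deriv (deriv g)) 1 = -(((d : ℝ) ^ 2 - 1) / (d : ℝ) ^ 2) := by
  set A : ℝ := (q : ℝ) - 1 with hA
  set B : ℝ := p + ((q : ℝ) - 2) with hB
  set C : ℝ := p * B - A with hC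
  have hd1 : (0 : ℝ) < (d : ℝ) + 1 := by positivity
  have hq2 : (2 : ℝ) ≤ (q : ℝ) := by exact_mod_cast hq
  have hd2 : (2 : ℝ) ≤ (d : ℝ) := by exact_mod_cast hd
  have hdne : (d : ℝ) ≠ 0 := by linarith
  have hp0 : 0 < p := by
    rw [hp]
    have : (q : ℝ) / ((d : ℝ) + 1) < 1 := (div_lt_one hd1).mpr hqd
    linarith
  have hDpos : 0 < B + 1 := by rw [hB]; linarith
  have hD : B + 1 ≠ 0 := ne_of_gt hDpos
  have hfF0 : f = auxF0 p A B d := funext fun x => hf x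
  -- key algebraic identity
  have hCd : (d : ℝ) * C = -(B + 1) ^ 2 := by
    rw [hC, hB, hA]
    exact eval_Cd p d q hp hd1
  have hCval : C = -(B + 1) ^ 2 / (d : ℝ) := by
    field_simp
    linarith [hCd]
  have e1 : ((d - 1 : ℕ) : ℝ) = (d : ℝ) - 1 := by
    have h1 : 1 ≤ d := by omega
    push_cast [h1]; ring
  have e2 : ((d - 2 : ℕ) : ℝ) = (d : ℝ) - 2 := by
    push_cast [hd]; ring
  -- evaluations at 1
  have hH1 : auxH p A B 1 = 1 := by
    rw [auxH, div_eq_one_iff_eq hD, hA, hB]; ring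
  have hF0_1 : auxF0 p A B d 1 = 1 := by rw [auxF0, hH1, one_pow]
  have hF1_1 : auxF1 p A B C d 1 = -1 := by
    rw [auxF1, hH1, one_pow, hCval]
    field_simp
  have hF2_1 : auxF2 p A B C d 1 = ((d : ℝ) - 1) / d + 2 / (B + 1) :=
    eval_F2 p A B C d hH1 hdne hD hCval e1
  have hF3_1 : auxF3 p A B C d 1 =
      -(((d : ℝ) - 1) * ((d : ℝ) - 2)) / d ^ 2 - 6 * ((d : ℝ) - 1) / ((d : ℝ) * (B + 1))
        - 6 / (B + 1) ^ 2 :=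
    eval_F3 p A B C d hH1 hdne hD hCval e1 e2
  -- the neighborhood where everything is smooth
  set W : Set ℝ := {x : ℝ | B + x ≠ 0 ∧ B + auxF0 p A B d x ≠ 0} with hWdef
  have h1W : (1 : ℝ) ∈ W := by
    constructor
    · exact hD
    · rw [hF0_1]; exact hD
  have hCrfl : C = p * B - A := hC
  have hWnhds : ∀ x ∈ W, W ∈ nhds x := by
    intro x hx
    have hU : {y : ℝ | B + y ≠ 0} ∈ nhds x := by
      have : ContinuousAt (fun y : ℝ => B + y) x := by fun_prop
      exact this.preimage_mem_nhds (isOpen_ne.mem_nhds hx.1)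
    have hcontF0 : ContinuousAt (auxF0 p A B d) x :=
      (hasDerivAt_auxF0 hCrfl hx.1).differentiableAt.continuousAt
    have hV : {y : ℝ | B + auxF0 p A B d y ≠ 0} ∈ nhds x := by
      have hc2 : ContinuousAt (fun y : ℝ => B + auxF0 p A B d y) x :=
        continuousAt_const.add hcontF0
      exact hc2.preimage_mem_nhds (isOpen_ne.mem_nhds hx.2)
    exact Filter.inter_mem hU hV
  -- chain rule derivatives on W
  set G1 : ℝ → ℝ := fun x => auxF1 p A B C d (auxF0 p A B d x) * auxF1 p A B C d x with hG1def
  set G2 : ℝ → ℝ := fun x =>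
    auxF2 p A B C d (auxF0 p A B d x) * auxF1 p A B C d x * auxF1 p A B C d x
      + auxF1 p A B C d (auxF0 p A B d x) * auxF2 p A B C d x with hG2def
  set G3 : ℝ → ℝ := fun x =>
    (auxF3 p A B C d (auxF0 p A B d x) * auxF1 p A B C d x * auxF1 p A B C d x
        + auxF2 p A B C d (auxF0 p A B d x) * auxF2 p A B C d x) * auxF1 p A B C d x
      + auxF2 p A B C d (auxF0 p A B d x) * auxF1 p A B C d x * auxF2 p A B C d x
      + ((auxF2 p A B C d (auxF0 p A B d x) * auxF1 p A B C d x * auxF2 p A B C d x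
        + auxF1 p A B C d (auxF0 p A B d x) * auxF3 p A B C d x)) with hG3def
  have hgd : ∀ x ∈ W, HasDerivAt g (G1 x) x := by
    intro x hx
    rw [hg, hfF0]
    exact ((hasDerivAt_auxF0 hCrfl hx.2).comp x (hasDerivAt_auxF0 hCrfl hx.1))
  have hG1d : ∀ x ∈ W, HasDerivAt G1 (G2 x) x := by
    intro x hx
    have h1 := (hasDerivAt_auxF1 (d := d) hCrfl hx.2).comp x (hasDerivAt_auxF0 hCrfl hx.1)
    have h2 := h1.mul (hasDerivAt_auxF1 (d := d) hCrfl hx.1)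
    exact h2
  have hG2d : ∀ x ∈ W, HasDerivAt G2 (G3 x) x := by
    intro x hx
    have h1 := (hasDerivAt_auxF2 (d := d) hCrfl hx.2).comp x (hasDerivAt_auxF0 hCrfl hx.1)
    have h2 := h1.mul (hasDerivAt_auxF1 (d := d) hCrfl hx.1)
    have h3 := h2.mul (hasDerivAt_auxF1 (d := d) hCrfl hx.1)
    have h4 := ((hasDerivAt_auxF1 (d := d) hCrfl hx.2).comp x
      (hasDerivAt_auxF0 hCrfl hx.1)).mul (hasDerivAt_auxF2 (d := d) hCrfl hx.1)
    exact h3.add h4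
  -- derivative identities
  have hder1 : ∀ x ∈ W, deriv g x = G1 x := fun x hx => (hgd x hx).deriv
  have hev1 : ∀ x ∈ W, deriv g =ᶠ[nhds x] G1 := by
    intro x hx
    filter_upwards [hWnhds x hx] with y hy using hder1 y hy
  have hder2 : ∀ x ∈ W, deriv (deriv g) x = G2 x := by
    intro x hx
    rw [Filter.EventuallyEq.deriv_eq (hev1 x hx)]
    exact (hG1d x hx).deriv
  have hev2 : ∀ x ∈ W, deriv (deriv g) =ᶠ[nhds x] G2 := by
    intro x hx
    filter_upwards [hWnhds x hx] with y hy using hder2 y hy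
  have hder3 : deriv (deriv (deriv g)) 1 = G3 1 := by
    rw [Filter.EventuallyEq.deriv_eq (hev2 1 h1W)]
    exact (hG2d 1 h1W).deriv
  refine ⟨?_, ?_, ?_, ?_⟩
  · rw [hg, hfF0]
    show auxF0 p A B d (auxF0 p A B d 1) = 1
    rw [hF0_1, hF0_1]
  · rw [hder1 1 h1W, hG1def]
    simp only [hF0_1, hF1_1]
    norm_num
  · rw [hder2 1 h1W, hG2def]
    simp only [hF0_1, hF1_1]
    exact final_eval2 _
  · rw [hder3, hG3def]
    simp only [hF0_1, hF1_1]
    exact final_eval3 _ _ _ _ hdne hD hF2_1 hF3_1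
end

section
/- At criticality p_c = 1 - q/(d+1) > 0, with g = f ∘ f for f(x) = ((p_c·x + (q-1))/(p_c + (q-2) + x))^d, one has the limit lim_{x → 1⁺} [ (g(x) - 1)^{-2} - (x - 1)^{-2} ] = (d²-1)/(3d²). -/
open Filter Set

noncomputable def hh (p q x : ℝ) : ℝ := (p * x + (q - 1)) / (p + (q - 2) + x)
noncomputable def hd1 (p q x : ℝ) : ℝ := ((p - 1) * (p + q - 1)) / (p + (q - 2) + x) ^ 2
noncomputable def hd2 (p q x : ℝ) : ℝ := (-2 * (p - 1) * (p + q - 1)) / (p + (q - 2) + x) ^ 3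
noncomputable def hd3 (p q x : ℝ) : ℝ := (6 * (p - 1) * (p + q - 1)) / (p + (q - 2) + x) ^ 4
noncomputable def ff (p q : ℝ) (d : ℕ) (x : ℝ) : ℝ := hh p q x ^ d
noncomputable def fd1 (p q : ℝ) (d : ℕ) (x : ℝ) : ℝ :=
  (d : ℝ) * hh p q x ^ (d - 1) * hd1 p q x
noncomputable def fd2 (p q : ℝ) (d : ℕ) (x : ℝ) : ℝ :=
  (d : ℝ) * ((d - 1 : ℕ) : ℝ) * hh p q x ^ (d - 2) * hd1 p q x ^ 2
    + (d : ℝ) * hh p q x ^ (d - 1) * hd2 p q x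
noncomputable def fd3 (p q : ℝ) (d : ℕ) (x : ℝ) : ℝ :=
  (d : ℝ) * ((d - 1 : ℕ) : ℝ) * ((d - 2 : ℕ) : ℝ) * hh p q x ^ (d - 3) * hd1 p q x ^ 3
    + 3 * (d : ℝ) * ((d - 1 : ℕ) : ℝ) * hh p q x ^ (d - 2) * hd1 p q x * hd2 p q x
    + (d : ℝ) * hh p q x ^ (d - 1) * hd3 p q x
noncomputable def gd1 (p q : ℝ) (d : ℕ) (x : ℝ) : ℝ := fd1 p q d (ff p q d x) * fd1 p q d x
noncomputable def gd2 (p q : ℝ) (d : ℕ) (x : ℝ) : ℝ :=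
  fd2 p q d (ff p q d x) * fd1 p q d x ^ 2 + fd1 p q d (ff p q d x) * fd2 p q d x
noncomputable def gd3 (p q : ℝ) (d : ℕ) (x : ℝ) : ℝ :=
  fd3 p q d (ff p q d x) * fd1 p q d x ^ 3
    + 3 * fd2 p q d (ff p q d x) * fd1 p q d x * fd2 p q d x
    + fd1 p q d (ff p q d x) * fd3 p q d x

section aux

variable {p q x : ℝ} {d : ℕ}

lemma den_hasDerivAt : HasDerivAt (fun y : ℝ => p + (q - 2) + y) 1 x :=
  (hasDerivAt_id x).const_add _

lemma hasDerivAt_hh (hx : p + (q - 2) + x ≠ 0) :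
    HasDerivAt (fun y => hh p q y) (hd1 p q x) x := by
  have hnum : HasDerivAt (fun y : ℝ => p * y + (q - 1)) p x := by
    simpa using ((hasDerivAt_id x).const_mul p).add_const (q - 1)
  have := hnum.div den_hasDerivAt hx
  refine this.congr_deriv ?_
  unfold hd1
  field_simp
  ring

lemma hasDerivAt_hd1 (hx : p + (q - 2) + x ≠ 0) :
    HasDerivAt (fun y => hd1 p q y) (hd2 p q x) x := by
  have hden : HasDerivAt (fun y : ℝ => (p + (q - 2) + y) ^ 2)
      (2 * (p + (q - 2) + x) ^ 1 * 1) x := den_hasDerivAt.pow 2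
  have := (hasDerivAt_const x ((p - 1) * (p + q - 1))).div hden (pow_ne_zero 2 hx)
  refine this.congr_deriv ?_
  unfold hd2
  field_simp
  ring

lemma hasDerivAt_hd2 (hx : p + (q - 2) + x ≠ 0) :
    HasDerivAt (fun y => hd2 p q y) (hd3 p q x) x := by
  have hden : HasDerivAt (fun y : ℝ => (p + (q - 2) + y) ^ 3)
      (3 * (p + (q - 2) + x) ^ 2 * 1) x := den_hasDerivAt.pow 3
  have := (hasDerivAt_const x (-2 * (p - 1) * (p + q - 1))).div hden (pow_ne_zero 3 hx)
  refine this.congr_deriv ?_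
  unfold hd3
  field_simp
  ring

lemma hasDerivAt_ff (hx : p + (q - 2) + x ≠ 0) :
    HasDerivAt (fun y => ff p q d y) (fd1 p q d x) x :=
  (hasDerivAt_hh hx).pow d

lemma hasDerivAt_fd1 (hx : p + (q - 2) + x ≠ 0) :
    HasDerivAt (fun y => fd1 p q d y) (fd2 p q d x) x := by
  have h1 : HasDerivAt (fun y => (d : ℝ) * hh p q y ^ (d - 1))
      ((d : ℝ) * (((d - 1 : ℕ) : ℝ) * hh p q x ^ (d - 1 - 1) * hd1 p q x)) x :=
    ((hasDerivAt_hh hx).pow (d - 1)).const_mul _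
  have := h1.mul (hasDerivAt_hd1 hx)
  refine this.congr_deriv ?_
  unfold fd2
  have : d - 1 - 1 = d - 2 := by omega
  rw [this]
  ring

lemma hasDerivAt_fd2 (hx : p + (q - 2) + x ≠ 0) :
    HasDerivAt (fun y => fd2 p q d y) (fd3 p q d x) x := by
  have h1 : HasDerivAt (fun y => (d : ℝ) * ((d - 1 : ℕ) : ℝ) * hh p q y ^ (d - 2))
      ((d : ℝ) * ((d - 1 : ℕ) : ℝ) * (((d - 2 : ℕ) : ℝ) * hh p q x ^ (d - 2 - 1) * hd1 p q x)) x :=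
    ((hasDerivAt_hh hx).pow (d - 2)).const_mul _
  have h2 : HasDerivAt (fun y => hd1 p q y ^ 2)
      (2 * hd1 p q x ^ (2 - 1) * hd2 p q x) x := (hasDerivAt_hd1 hx).pow 2
  have h3 : HasDerivAt (fun y => (d : ℝ) * hh p q y ^ (d - 1))
      ((d : ℝ) * (((d - 1 : ℕ) : ℝ) * hh p q x ^ (d - 1 - 1) * hd1 p q x)) x :=
    ((hasDerivAt_hh hx).pow (d - 1)).const_mul _
  have := (h1.mul h2).add (h3.mul (hasDerivAt_hd2 hx))
  refine this.congr_deriv ?_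
  unfold fd3
  have e1 : d - 2 - 1 = d - 3 := by omega
  have e2 : d - 1 - 1 = d - 2 := by omega
  rw [e1, e2]
  norm_num
  ring

lemma hasDerivAt_gg (hx : p + (q - 2) + x ≠ 0) (hfx : p + (q - 2) + ff p q d x ≠ 0) :
    HasDerivAt (fun y => ff p q d (ff p q d y)) (gd1 p q d x) x :=
  (hasDerivAt_ff hfx).comp x (hasDerivAt_ff hx)

lemma hasDerivAt_gd1 (hx : p + (q - 2) + x ≠ 0) (hfx : p + (q - 2) + ff p q d x ≠ 0) :
    HasDerivAt (fun y => gd1 p q d y) (gd2 p q d x) x := by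
  have h1 : HasDerivAt (fun y => fd1 p q d (ff p q d y)) (fd2 p q d (ff p q d x) * fd1 p q d x) x :=
    (hasDerivAt_fd1 hfx).comp x (hasDerivAt_ff hx)
  have := h1.mul (hasDerivAt_fd1 (d := d) hx)
  refine this.congr_deriv ?_
  unfold gd2
  ring

lemma hasDerivAt_gd2 (hx : p + (q - 2) + x ≠ 0) (hfx : p + (q - 2) + ff p q d x ≠ 0) :
    HasDerivAt (fun y => gd2 p q d y) (gd3 p q d x) x := by
  have h1 : HasDerivAt (fun y => fd2 p q d (ff p q d y)) (fd3 p q d (ff p q d x) * fd1 p q d x) x :=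
    (hasDerivAt_fd2 hfx).comp x (hasDerivAt_ff hx)
  have h2 : HasDerivAt (fun y => fd1 p q d y ^ 2)
      (2 * fd1 p q d x ^ (2 - 1) * fd2 p q d x) x := (hasDerivAt_fd1 hx).pow 2
  have h3 : HasDerivAt (fun y => fd1 p q d (ff p q d y)) (fd2 p q d (ff p q d x) * fd1 p q d x) x :=
    (hasDerivAt_fd1 hfx).comp x (hasDerivAt_ff hx)
  have := (h1.mul h2).add (h3.mul (hasDerivAt_fd2 (d := d) hx))
  refine this.congr_deriv ?_
  unfold gd3
  norm_num
  ring

lemma continuousAt_hh (hx : p + (q - 2) + x ≠ 0) : ContinuousAt (fun y => hh p q y) x :=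
  ContinuousAt.div (by fun_prop) (by fun_prop) hx

lemma continuousAt_hd1 (hx : p + (q - 2) + x ≠ 0) : ContinuousAt (fun y => hd1 p q y) x :=
  ContinuousAt.div (by fun_prop) (by fun_prop) (pow_ne_zero 2 hx)

lemma continuousAt_hd2 (hx : p + (q - 2) + x ≠ 0) : ContinuousAt (fun y => hd2 p q y) x :=
  ContinuousAt.div (by fun_prop) (by fun_prop) (pow_ne_zero 3 hx)

lemma continuousAt_hd3 (hx : p + (q - 2) + x ≠ 0) : ContinuousAt (fun y => hd3 p q y) x :=
  ContinuousAt.div (by fun_prop) (by fun_prop) (pow_ne_zero 4 hx)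

lemma continuousAt_ff (hx : p + (q - 2) + x ≠ 0) : ContinuousAt (fun y => ff p q d y) x :=
  (continuousAt_hh hx).pow d

lemma continuousAt_fd1 (hx : p + (q - 2) + x ≠ 0) : ContinuousAt (fun y => fd1 p q d y) x :=
  (continuousAt_const.mul ((continuousAt_hh hx).pow _)).mul (continuousAt_hd1 hx)

lemma continuousAt_fd2 (hx : p + (q - 2) + x ≠ 0) : ContinuousAt (fun y => fd2 p q d y) x :=
  ((continuousAt_const.mul ((continuousAt_hh hx).pow _)).mul ((continuousAt_hd1 hx).pow 2)).add
    ((continuousAt_const.mul ((continuousAt_hh hx).pow _)).mul (continuousAt_hd2 hx))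

lemma continuousAt_fd3 (hx : p + (q - 2) + x ≠ 0) : ContinuousAt (fun y => fd3 p q d y) x := by
  unfold fd3
  exact (((continuousAt_const.mul ((continuousAt_hh hx).pow _)).mul
      ((continuousAt_hd1 hx).pow 3)).add
    (((continuousAt_const.mul ((continuousAt_hh hx).pow _)).mul (continuousAt_hd1 hx)).mul
      (continuousAt_hd2 hx))).add
    ((continuousAt_const.mul ((continuousAt_hh hx).pow _)).mul (continuousAt_hd3 hx))

lemma continuousAt_gd3 (hx : p + (q - 2) + x ≠ 0) (hfx : p + (q - 2) + ff p q d x ≠ 0) :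
    ContinuousAt (fun y => gd3 p q d y) x := by
  have hcf : ContinuousAt (fun y => ff p q d y) x := continuousAt_ff hx
  have c1 : ContinuousAt (fun y => fd3 p q d (ff p q d y)) x :=
    (continuousAt_fd3 hfx).comp hcf
  have c2 : ContinuousAt (fun y => fd2 p q d (ff p q d y)) x :=
    (continuousAt_fd2 hfx).comp hcf
  have c3 : ContinuousAt (fun y => fd1 p q d (ff p q d y)) x :=
    (continuousAt_fd1 hfx).comp hcf
  exact ((c1.mul ((continuousAt_fd1 hx).pow 3)).add
    (((continuousAt_const.mul c2).mul (continuousAt_fd1 hx)).mul (continuousAt_fd2 hx))).add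
    (c3.mul (continuousAt_fd3 hx))

end aux

set_option maxHeartbeats 2000000 in
theorem ff_power_law_limit (d q : ℕ) (hd : 2 ≤ d) (hq : 2 ≤ q)
    (hqd : (q : ℝ) < (d : ℝ) + 1)
    (p : ℝ) (hp : p = 1 - (q : ℝ) / ((d : ℝ) + 1))
    (f g : ℝ → ℝ)
    (hf : ∀ x : ℝ, f x = ((p * x + ((q : ℝ) - 1)) / (p + ((q : ℝ) - 2) + x)) ^ d)
    (hg : g = f ∘ f) :
    Filter.Tendsto (fun x : ℝ => ((g x - 1) ^ 2)⁻¹ - ((x - 1) ^ 2)⁻¹)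
      (nhdsWithin 1 (Set.Ioi 1))
      (nhds (((d : ℝ) ^ 2 - 1) / (3 * (d : ℝ) ^ 2))) := by
  have hd0 : (0:ℝ) < (d:ℝ) := by exact_mod_cast Nat.lt_of_lt_of_le (by norm_num) hd
  have hdne : (d:ℝ) ≠ 0 := ne_of_gt hd0
  have hd1R : (0:ℝ) < (d:ℝ) + 1 := by linarith
  have hd1ne : (d:ℝ) + 1 ≠ 0 := ne_of_gt hd1R
  have hq0 : (0:ℝ) < (q:ℝ) := by exact_mod_cast Nat.lt_of_lt_of_le (by norm_num) hq
  -- the value D = p + q - 1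
  have hDval : p + (q:ℝ) - 1 = (q:ℝ) * (d:ℝ) / ((d:ℝ) + 1) := by
    rw [hp]; field_simp; ring
  have hDpos : 0 < p + (q:ℝ) - 1 := by rw [hDval]; positivity
  have hDne : p + (q:ℝ) - 1 ≠ 0 := ne_of_gt hDpos
  have hden1 : p + ((q:ℝ) - 2) + 1 = p + (q:ℝ) - 1 := by ring
  have ne1 : p + ((q:ℝ) - 2) + 1 ≠ 0 := by rw [hden1]; exact hDne
  have key1 : (p - 1) * (d:ℝ) = -(p + (q:ℝ) - 1) := by rw [hp]; field_simp; ring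
  -- values at 1
  have hh1 : hh p (q:ℝ) 1 = 1 := by
    unfold hh
    rw [hden1, show p * 1 + ((q:ℝ) - 1) = p + (q:ℝ) - 1 by ring, div_self hDne]
  have ff1 : ff p (q:ℝ) d 1 = 1 := by unfold ff; rw [hh1, one_pow]
  have nef1 : p + ((q:ℝ) - 2) + ff p (q:ℝ) d 1 ≠ 0 := by rw [ff1]; exact ne1
  have hd1_1 : hd1 p (q:ℝ) 1 = -1 / (d:ℝ) := by
    unfold hd1
    rw [hden1, div_eq_div_iff (by positivity) hdne]
    linear_combination (p + (q:ℝ) - 1) * key1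
  have hd2_1 : hd2 p (q:ℝ) 1 = 2 / ((d:ℝ) * (p + (q:ℝ) - 1)) := by
    unfold hd2
    rw [hden1, div_eq_div_iff (by positivity) (by positivity)]
    linear_combination (-2 * (p + (q:ℝ) - 1)^2) * key1
  have hd3_1 : hd3 p (q:ℝ) 1 = -6 / ((d:ℝ) * (p + (q:ℝ) - 1)^2) := by
    unfold hd3
    rw [hden1, div_eq_div_iff (by positivity) (by positivity)]
    linear_combination (6 * (p + (q:ℝ) - 1)^3) * key1
  have cast1 : ((d - 1 : ℕ) : ℝ) = (d:ℝ) - 1 := by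
    rw [Nat.cast_sub (by omega)]; norm_num
  have cast2 : ((d - 2 : ℕ) : ℝ) = (d:ℝ) - 2 := by
    rw [Nat.cast_sub (by omega)]; norm_num
  have fd1_1 : fd1 p (q:ℝ) d 1 = -1 := by
    unfold fd1; rw [hh1, one_pow, hd1_1]; field_simp
  have fd2_1 : fd2 p (q:ℝ) d 1 =
      ((d:ℝ) - 1) / (d:ℝ) + 2 / (p + (q:ℝ) - 1) := by
    unfold fd2
    rw [hh1, one_pow, one_pow, hd1_1, hd2_1, cast1]
    field_simp
  have fd3_1 : fd3 p (q:ℝ) d 1 =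
      -(((d:ℝ) - 1) * ((d:ℝ) - 2)) / (d:ℝ)^2 - 6 * ((d:ℝ) - 1) / ((d:ℝ) * (p + (q:ℝ) - 1))
        - 6 / (p + (q:ℝ) - 1)^2 := by
    unfold fd3
    rw [hh1, one_pow, one_pow, one_pow, hd1_1, hd2_1, hd3_1, cast1, cast2]
    field_simp
    ring
  have gd1_1 : gd1 p (q:ℝ) d 1 = 1 := by
    unfold gd1; rw [ff1, fd1_1]; norm_num
  have gd2_1 : gd2 p (q:ℝ) d 1 = 0 := by
    unfold gd2; rw [ff1, fd1_1]; ring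
  have gd3_1 : gd3 p (q:ℝ) d 1 = -((d:ℝ)^2 - 1) / (d:ℝ)^2 := by
    unfold gd3
    rw [ff1, fd1_1, fd2_1, fd3_1]
    field_simp
    ring
  -- connect g with ff ∘ ff
  have hgff : g = fun y => ff p (q:ℝ) d (ff p (q:ℝ) d y) := by
    funext y
    rw [hg]
    show f (f y) = _
    rw [hf, hf y]
    rfl
  -- eventual non-vanishing of denominators
  have e1 : ∀ᶠ x in nhds (1:ℝ), p + ((q:ℝ) - 2) + x ≠ 0 := by
    have c1 : ContinuousAt (fun x : ℝ => p + ((q:ℝ) - 2) + x) 1 := by fun_prop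
    exact c1.eventually_ne ne1
  have e2 : ∀ᶠ x in nhds (1:ℝ), p + ((q:ℝ) - 2) + ff p (q:ℝ) d x ≠ 0 := by
    have c2 : ContinuousAt (fun x : ℝ => p + ((q:ℝ) - 2) + ff p (q:ℝ) d x) 1 :=
      continuousAt_const.add (continuousAt_ff ne1)
    exact c2.eventually_ne nef1
  have evW : ∀ᶠ x in nhdsWithin (1:ℝ) (Set.Ioi 1),
      p + ((q:ℝ) - 2) + x ≠ 0 ∧ p + ((q:ℝ) - 2) + ff p (q:ℝ) d x ≠ 0 :=
    ((e1.and e2).filter_mono nhdsWithin_le_nhds)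
  have evI : ∀ᶠ x in nhdsWithin (1:ℝ) (Set.Ioi 1), (1:ℝ) < x :=
    eventually_mem_nhdsWithin
  -- the three L'Hopital steps
  have T3 : Tendsto (fun x => gd3 p (q:ℝ) d x / 6) (nhdsWithin 1 (Set.Ioi 1))
      (nhds (gd3 p (q:ℝ) d 1 / 6)) :=
    (((continuousAt_gd3 ne1 nef1).tendsto).mono_left nhdsWithin_le_nhds).div_const 6
  have T2 : Tendsto (fun x => gd2 p (q:ℝ) d x / (6 * (x - 1))) (nhdsWithin 1 (Set.Ioi 1))
      (nhds (gd3 p (q:ℝ) d 1 / 6)) := by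
    apply HasDerivAt.lhopital_zero_nhdsGT (f' := fun x => gd3 p (q:ℝ) d x)
      (g' := fun _ => (6:ℝ))
    · exact evW.mono fun x hx => hasDerivAt_gd2 hx.1 hx.2
    · refine Eventually.of_forall fun x => ?_
      simpa using (((hasDerivAt_id x).sub_const 1).const_mul (6:ℝ))
    · exact Eventually.of_forall fun x => by norm_num
    · have := (hasDerivAt_gd2 ne1 nef1).continuousAt.tendsto.mono_left
        (nhdsWithin_le_nhds (s := Set.Ioi (1:ℝ)))
      rwa [gd2_1] at this
    · have : Tendsto (fun x : ℝ => 6 * (x - 1)) (nhds 1) (nhds (6 * (1 - 1))) := by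
        exact (continuous_const.mul (continuous_id.sub continuous_const)).tendsto 1
      simpa using this.mono_left (nhdsWithin_le_nhds (s := Set.Ioi (1:ℝ)))
    · exact T3
  have T1 : Tendsto (fun x => (gd1 p (q:ℝ) d x - 1) / (3 * (x - 1) ^ 2))
      (nhdsWithin 1 (Set.Ioi 1)) (nhds (gd3 p (q:ℝ) d 1 / 6)) := by
    apply HasDerivAt.lhopital_zero_nhdsGT (f' := fun x => gd2 p (q:ℝ) d x)
      (g' := fun x => 6 * (x - 1))
    · exact evW.mono fun x hx => (hasDerivAt_gd1 hx.1 hx.2).sub_const 1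
    · refine Eventually.of_forall fun x => ?_
      have := (((hasDerivAt_id x).sub_const 1).pow 2).const_mul (3:ℝ)
      refine this.congr_deriv ?_
      norm_num; ring
    · exact evI.mono fun x hx => by
        have : (0:ℝ) < x - 1 := by linarith
        positivity
    · have := (hasDerivAt_gd1 ne1 nef1).continuousAt.tendsto.mono_left
        (nhdsWithin_le_nhds (s := Set.Ioi (1:ℝ)))
      have h2 := this.sub_const 1
      rw [gd1_1] at h2
      simpa using h2
    · have : Tendsto (fun x : ℝ => 3 * (x - 1) ^ 2) (nhds 1) (nhds (3 * (1 - 1) ^ 2)) :=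
        (continuous_const.mul ((continuous_id.sub continuous_const).pow 2)).tendsto 1
      simpa using this.mono_left (nhdsWithin_le_nhds (s := Set.Ioi (1:ℝ)))
    · exact T2
  have T0 : Tendsto (fun x => (g x - x) / (x - 1) ^ 3) (nhdsWithin 1 (Set.Ioi 1))
      (nhds (gd3 p (q:ℝ) d 1 / 6)) := by
    apply HasDerivAt.lhopital_zero_nhdsGT (f' := fun x => gd1 p (q:ℝ) d x - 1)
      (g' := fun x => 3 * (x - 1) ^ 2)
    · refine evW.mono fun x hx => ?_
      have := (hasDerivAt_gg hx.1 hx.2).sub (hasDerivAt_id x)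
      rw [hgff]
      exact this
    · refine Eventually.of_forall fun x => ?_
      have := ((hasDerivAt_id x).sub_const 1).pow 3
      refine this.congr_deriv ?_
      norm_num
    · exact evI.mono fun x hx => by
        have : (0:ℝ) < x - 1 := by linarith
        positivity
    · have cg : ContinuousAt g 1 := by
        rw [hgff]
        exact (continuousAt_ff nef1).comp (continuousAt_ff ne1)
      have g1 : g 1 = 1 := by rw [hgff]; simp only [ff1]
      have := (cg.tendsto.mono_left (nhdsWithin_le_nhds (s := Set.Ioi (1:ℝ)))).sub
        (tendsto_id.mono_left (nhdsWithin_le_nhds (s := Set.Ioi (1:ℝ))))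
      rw [g1] at this
      simpa using this
    · have : Tendsto (fun x : ℝ => (x - 1) ^ 3) (nhds 1) (nhds ((1 - 1) ^ 3)) :=
        ((continuous_id.sub continuous_const).pow 3).tendsto 1
      simpa using this.mono_left (nhdsWithin_le_nhds (s := Set.Ioi (1:ℝ)))
    · exact T1
  -- slope limit: (g x - 1)/(x-1) → 1
  have tsq : Tendsto (fun x : ℝ => (x - 1) ^ 2) (nhdsWithin 1 (Set.Ioi 1)) (nhds 0) := by
    have : Tendsto (fun x : ℝ => (x - 1) ^ 2) (nhds 1) (nhds ((1 - 1) ^ 2)) :=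
      ((continuous_id.sub continuous_const).pow 2).tendsto 1
    simpa using this.mono_left nhdsWithin_le_nhds
  have Lslope : Tendsto (fun x => (g x - 1) / (x - 1)) (nhdsWithin 1 (Set.Ioi 1)) (nhds 1) := by
    have base := (T0.mul tsq).add_const 1
    have heq : (fun x => (g x - x) / (x - 1) ^ 3 * (x - 1) ^ 2 + 1)
        =ᶠ[nhdsWithin (1:ℝ) (Set.Ioi 1)] (fun x => (g x - 1) / (x - 1)) := by
      refine evI.mono fun x hx => ?_
      have hx1 : x - 1 ≠ 0 := by intro h; nlinarith [hx]
      field_simp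
      ring
    have := base.congr' heq
    simpa using this
  have Lplus : Tendsto (fun x => (g x - 1 + (x - 1)) / (x - 1))
      (nhdsWithin 1 (Set.Ioi 1)) (nhds 2) := by
    have base := Lslope.add_const 1
    have heq : (fun x => (g x - 1) / (x - 1) + 1)
        =ᶠ[nhdsWithin (1:ℝ) (Set.Ioi 1)] (fun x => (g x - 1 + (x - 1)) / (x - 1)) := by
      refine evI.mono fun x hx => ?_
      have hx1 : x - 1 ≠ 0 := by intro h; nlinarith [hx]
      field_simp
    have h2 := base.congr' heq
    have e21 : (1:ℝ) + 1 = 2 := by norm_num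
    rwa [e21] at h2
  have Linv : Tendsto (fun x => (x - 1) / (g x - 1)) (nhdsWithin 1 (Set.Ioi 1)) (nhds 1) := by
    have := Lslope.inv₀ one_ne_zero
    simp only [inv_div, inv_one] at this
    exact this
  have Tneg : Tendsto (fun x => (x - g x) / (x - 1) ^ 3) (nhdsWithin 1 (Set.Ioi 1))
      (nhds (-(gd3 p (q:ℝ) d 1 / 6))) := by
    have := T0.neg
    refine this.congr fun x => ?_
    rw [← neg_div, neg_sub]
  have evg : ∀ᶠ x in nhdsWithin (1:ℝ) (Set.Ioi 1), 0 < g x - 1 := by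
    have h1 : ∀ᶠ x in nhdsWithin (1:ℝ) (Set.Ioi 1), 0 < (g x - 1) / (x - 1) :=
      Lslope.eventually (eventually_gt_nhds one_pos)
    refine (h1.and evI).mono fun x hx => ?_
    have hx1 : (0:ℝ) < x - 1 := by linarith [hx.2]
    have := mul_pos hx.1 hx1
    rwa [div_mul_cancel₀ _ (ne_of_gt hx1)] at this
  have TP : Tendsto (fun x => (x - g x) / (x - 1) ^ 3 * ((g x - 1 + (x - 1)) / (x - 1))
      * ((x - 1) / (g x - 1)) ^ 2) (nhdsWithin 1 (Set.Ioi 1))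
      (nhds (-(gd3 p (q:ℝ) d 1 / 6) * 2 * 1 ^ 2)) :=
    (Tneg.mul Lplus).mul (Linv.pow 2)
  have heqF : (fun x => (x - g x) / (x - 1) ^ 3 * ((g x - 1 + (x - 1)) / (x - 1))
      * ((x - 1) / (g x - 1)) ^ 2)
      =ᶠ[nhdsWithin (1:ℝ) (Set.Ioi 1)]
      (fun x : ℝ => ((g x - 1) ^ 2)⁻¹ - ((x - 1) ^ 2)⁻¹) := by
    refine (evI.and evg).mono fun x hx => ?_
    have hu : x - 1 ≠ 0 := sub_ne_zero.mpr (ne_of_gt hx.1)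
    have hv : g x - 1 ≠ 0 := ne_of_gt hx.2
    field_simp
    ring
  have hval : -(gd3 p (q:ℝ) d 1 / 6) * 2 * 1 ^ 2 = ((d:ℝ) ^ 2 - 1) / (3 * (d:ℝ) ^ 2) := by
    rw [gd3_1]
    field_simp
    ring
  have final := TP.congr' heqF
  rwa [hval] at final
end

section
/- If a real sequence (a_n) with a_n > 1 satisfies a_{n+1} = g(a_n) where g = f ∘ f at criticality p_c = 1 - q/(d+1) > 0 (f(x) = ((p_c·x + (q-1))/(p_c + (q-2) + x))^d), and a_n → 1, then lim_{n→∞} (1/n)·(a_n - 1)^{-2} = (d²-1)/(3d²). -/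
open Filter Topology Finset

private lemma ffir_bin3 (d : ℕ) (hd : 2 ≤ d) (u : ℝ) :
    (1+u)^d = 1 + d*u + (d.choose 2 : ℝ)*u^2
      + u^3 * ∑ j ∈ Finset.range (d-2), (d.choose (3+j) : ℝ) * u^j := by
  rw [add_comm (1:ℝ) u, add_pow]
  simp only [one_pow, mul_one]
  rw [show d+1 = 3 + (d-2) from by omega, Finset.sum_range_add]
  rw [Finset.mul_sum]
  rw [Finset.sum_range_succ, Finset.sum_range_succ, Finset.sum_range_one]
  have hterm : ∀ j, u^(3+j)*((d.choose (3+j)):ℝ) = u^3*((d.choose (3+j):ℝ)*u^j) := by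
    intro j; rw [pow_add]; ring
  rw [Finset.sum_congr rfl fun j _ => hterm j]
  simp [Nat.choose_zero_right, Nat.choose_one_right]
  ring

private lemma ffir_rep (d : ℕ) (hd : 2 ≤ d) (s t : ℝ) (hs : s ≠ 0) (hst : s + t ≠ 0)
    (Qv : ℝ)
    (hQv : Qv = ∑ j ∈ Finset.range (d-2), (d.choose (3+j) : ℝ) * (-(t/(d:ℝ))*(s/(s+t)))^j) :
    ((s + (1 - s/(d:ℝ))*t)/(s+t))^d - 1
      = -t + (1/s + (d.choose 2:ℝ)/(d:ℝ)^2)*t^2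
        + t^3 * (-1/(s*(s+t)) - ((d.choose 2:ℝ)/(d:ℝ)^2)*((s/(s+t)) + 1)/(s+t)
                  - (1/(d:ℝ)^3)*(s/(s+t))^3 * Qv) := by
  have hd0 : (d:ℝ) ≠ 0 := Nat.cast_ne_zero.mpr (by omega)
  have hbase : (s + (1 - s/(d:ℝ))*t)/(s+t) = 1 + (-(t/(d:ℝ))*(s/(s+t))) := by
    field_simp
    ring
  rw [hbase, ffir_bin3 d hd _, ← hQv]
  field_simp
  ring

private lemma ffir_key (c2 t Rt RF Fv M MF : ℝ) (ht : t ≠ 0)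
    (hM : M = -1 + c2*t + t^2*Rt) (hFv : Fv = t*M)
    (hMF : MF = -1 + c2*Fv + Fv^2*RF)
    (hM0 : M ≠ 0) (hMF0 : MF ≠ 0) :
    ((Fv*MF)^2)⁻¹ - (t^2)⁻¹ =
      (2*c2*(c2 + t*Rt - 2*c2*M - 2*t*M^2*RF + t*(c2*M + t*M^2*RF)^2)
        + M^2*(2*RF - c2^2 - 2*c2*(t*M)*RF - (t*M)^2*RF^2)
        + (2*Rt - c2^2 - 2*c2*t*Rt - t^2*Rt^2)*MF^2) / (M^2*MF^2) := by
  subst hFv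
  rw [eq_div_iff (by positivity), inv_sub_inv (by positivity) (by positivity), div_mul_eq_mul_div, div_eq_iff (by positivity)]
  subst hM hMF
  ring

private lemma ffir_choose3 (d : ℕ) (hd : 2 ≤ d) :
    (d.choose 3 : ℝ) = (d:ℝ)*((d:ℝ)-1)*((d:ℝ)-2)/6 := by
  have h := Nat.choose_succ_right_eq d 2
  have h' := congrArg (fun n : ℕ => (n : ℝ)) h
  push_cast [Nat.cast_sub hd, Nat.cast_choose_two] at h'
  have hd2 : ((d:ℝ) - 2) = ((d:ℕ) : ℝ) - 2 := rfl
  linear_combination h'/3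

private lemma ffir_core (d : ℕ) (hd : 2 ≤ d) (s : ℝ) (hs : 0 < s) (F : ℝ → ℝ)
    (hF : ∀ t : ℝ, s + t ≠ 0 → F t = ((s + (1 - s/(d:ℝ))*t)/(s+t))^d - 1) :
    Filter.Tendsto (fun t : ℝ => (((F (F t))^2)⁻¹ - (t^2)⁻¹)) (nhdsWithin 0 {(0:ℝ)}ᶜ)
      (nhds (((d:ℝ)^2 - 1)/(3*(d:ℝ)^2))) := by
  have hd0 : (d:ℝ) ≠ 0 := Nat.cast_ne_zero.mpr (by omega)
  have hsne : s ≠ 0 := hs.ne'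
  set v : ℝ → ℝ := fun t => s/(s+t) with hv
  set uu : ℝ → ℝ := fun t => -(t/(d:ℝ)) * v t with huu
  set Q : ℝ → ℝ := fun x => ∑ j ∈ Finset.range (d-2), ((d.choose (3+j)):ℝ) * x^j with hQ
  set c2 : ℝ := 1/s + (d.choose 2:ℝ)/(d:ℝ)^2 with hc2
  set c3 : ℝ := -1/(s*(s+0)) - ((d.choose 2:ℝ)/(d:ℝ)^2)*((s/(s+0)) + 1)/(s+0)
      - (1/(d:ℝ)^3)*(s/(s+0))^3 * (d.choose 3 : ℝ) with hc3
  set R : ℝ → ℝ := fun t => -1/(s*(s+t)) - ((d.choose 2:ℝ)/(d:ℝ)^2)*((v t) + 1)/(s+t)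
      - (1/(d:ℝ)^3)*(v t)^3 * Q (uu t) with hR
  set m : ℝ → ℝ := fun t => -1 + c2*t + t^2*R t with hm
  -- representation
  have hrep : ∀ t : ℝ, s + t ≠ 0 → F t = -t + c2*t^2 + t^3 * R t := by
    intro t ht
    rw [hF t ht, hc2, hR]
    simp only [hv, huu, hQ]
    exact ffir_rep d hd s t hsne ht _ rfl
  -- Q 0 = choose d 3
  have hQ0 : Q 0 = (d.choose 3 : ℝ) := by
    simp only [hQ]
    by_cases hd2 : d = 2
    · subst hd2; simp
    · have h3 : 3 ≤ d := by omega
      rw [Finset.sum_eq_single 0]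
      · simp
      · intro b _ hb0; simp [zero_pow hb0]
      · intro h; exact absurd (Finset.mem_range.mpr (by omega)) h
  -- continuity of R at 0
  have hs0 : s + (0:ℝ) ≠ 0 := by simpa using hsne
  have hsc : ContinuousAt (fun t : ℝ => s + t) 0 := by fun_prop
  have hvc : ContinuousAt v 0 := by
    rw [hv]; exact continuousAt_const.div hsc hs0
  have huc : ContinuousAt uu 0 := by
    rw [huu]; exact ((continuousAt_id.div_const _).neg).mul hvc
  have hQc : Continuous Q := by
    rw [hQ]
    exact continuous_finset_sum _ (fun j _ => continuous_const.mul (continuous_pow j))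
  have hRc : ContinuousAt R 0 := by
    rw [hR]
    refine ContinuousAt.sub (ContinuousAt.sub ?_ ?_) ?_
    · exact continuousAt_const.div (continuousAt_const.mul hsc) (by simpa using mul_ne_zero hsne hs0)
    · exact (continuousAt_const.mul (hvc.add continuousAt_const)).div hsc hs0
    · exact (continuousAt_const.mul (hvc.pow 3)).mul (hQc.continuousAt.comp huc)
  have huu0 : uu 0 = 0 := by simp [huu]
  have hR0 : R 0 = c3 := by
    rw [hR]
    simp only [huu0, hQ0, hv, hc3]
  -- limits along the punctured neighborhood
  set l : Filter ℝ := nhdsWithin 0 {(0:ℝ)}ᶜ with hl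
  have tid : Tendsto (fun t : ℝ => t) l (𝓝 0) := tendsto_id.mono_left nhdsWithin_le_nhds
  have htR : Tendsto R l (𝓝 c3) := by
    have := hRc.tendsto
    rw [hR0] at this
    exact this.mono_left nhdsWithin_le_nhds
  have htm : Tendsto m l (𝓝 (-1)) := by
    rw [hm]
    have : Tendsto (fun t:ℝ => -1 + c2*t + t^2*R t) l (𝓝 (-1 + c2*0 + 0^2*c3)) :=
      (tendsto_const_nhds.add (tendsto_const_nhds.mul tid)).add ((tid.pow 2).mul htR)
    simpa using this
  have hev_s : ∀ᶠ t in l, s + t ≠ 0 := by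
    have : ∀ᶠ t in 𝓝 (0:ℝ), s + t ≠ 0 := hsc.eventually_ne hs0
    exact this.filter_mono nhdsWithin_le_nhds
  have hev_t : ∀ᶠ t in l, t ≠ 0 := by
    filter_upwards [self_mem_nhdsWithin] with t ht
    simpa using ht
  have hev_m : ∀ᶠ t in l, m t ≠ 0 := htm.eventually_ne (by norm_num)
  have hFt_ev : F =ᶠ[l] fun t => t * m t := by
    filter_upwards [hev_s] with t ht
    rw [hrep t ht]; simp only [hm]; ring
  have hF0 : Tendsto F l (𝓝 0) := by
    have h1 : Tendsto (fun t => t * m t) l (𝓝 (0 * -1)) := tid.mul htm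
    norm_num at h1
    exact h1.congr' hFt_ev.symm
  have hFne : ∀ᶠ t in l, F t ≠ 0 := by
    filter_upwards [hFt_ev, hev_t, hev_m] with t h1 h2 h3
    rw [h1]; exact mul_ne_zero h2 h3
  have hFl : Tendsto F l l := by
    rw [hl, tendsto_nhdsWithin_iff]
    exact ⟨hF0, by simpa using hFne⟩
  have tRF : Tendsto (fun t => R (F t)) l (𝓝 c3) := htR.comp hFl
  have tmF : Tendsto (fun t => m (F t)) l (𝓝 (-1)) := htm.comp hFl
  -- the explicit limit function
  set Φ : ℝ×ℝ×ℝ×ℝ×ℝ → ℝ := fun z =>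
      (2*c2*(c2 + z.1*z.2.1 - 2*c2*z.2.2.1 - 2*z.1*z.2.2.1^2*z.2.2.2.1
          + z.1*(c2*z.2.2.1 + z.1*z.2.2.1^2*z.2.2.2.1)^2)
        + z.2.2.1^2*(2*z.2.2.2.1 - c2^2 - 2*c2*(z.1*z.2.2.1)*z.2.2.2.1
          - (z.1*z.2.2.1)^2*z.2.2.2.1^2)
        + (2*z.2.1 - c2^2 - 2*c2*z.1*z.2.1 - z.1^2*z.2.1^2)*z.2.2.2.2^2)
      / (z.2.2.1^2*z.2.2.2.2^2) with hΦ
  have hkey : (fun t => ((F (F t))^2)⁻¹ - (t^2)⁻¹)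
      =ᶠ[l] (fun t => Φ (t, R t, m t, R (F t), m (F t))) := by
    filter_upwards [hev_t, hev_s, hev_m, hFl.eventually hev_s, hFl.eventually hev_m]
      with t ht0 hts hmt hsF hmF
    have hFt : F t = t * m t := by rw [hrep t hts]; simp only [hm]; ring
    have hFF : F (F t) = F t * m (F t) := by
      rw [hrep (F t) hsF]; simp only [hm]; ring
    rw [hFF, hΦ]
    exact ffir_key c2 t (R t) (R (F t)) (F t) (m t) (m (F t)) ht0
      (by simp only [hm]) hFt (by simp only [hm]) hmt hmF
  have hΦc : ContinuousAt Φ ((0:ℝ), c3, -1, c3, -1) := by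
    rw [hΦ]
    apply ContinuousAt.div
    · fun_prop
    · fun_prop
    · norm_num
  have hcomp : Tendsto (fun t => ((t, R t, m t, R (F t), m (F t)) : ℝ×ℝ×ℝ×ℝ×ℝ)) l
      (𝓝 ((0:ℝ), c3, -1, c3, -1)) := by
    refine tid.prodMk_nhds (htR.prodMk_nhds (htm.prodMk_nhds (tRF.prodMk_nhds tmF)))
  have hW : Tendsto (fun t => Φ (t, R t, m t, R (F t), m (F t))) l (𝓝 (Φ (0, c3, -1, c3, -1))) :=
    hΦc.tendsto.comp hcomp
  have hE : Φ ((0:ℝ), c3, -1, c3, -1) = ((d:ℝ)^2 - 1)/(3*(d:ℝ)^2) := by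
    rw [hΦ]
    simp only
    rw [hc3, hc2, ffir_choose3 d hd, Nat.cast_choose_two]
    field_simp
    ring
  rw [hE] at hW
  exact hW.congr' hkey.symm

theorem ff_iteration_rate (d q : ℕ) (hd : 2 ≤ d) (hq : 2 ≤ q)
    (hqd : (q : ℝ) < (d : ℝ) + 1)
    (p : ℝ) (hp : p = 1 - (q : ℝ) / ((d : ℝ) + 1))
    (f g : ℝ → ℝ)
    (hf : ∀ x : ℝ, f x = ((p * x + ((q : ℝ) - 1)) / (p + ((q : ℝ) - 2) + x)) ^ d)
    (hg : g = f ∘ f)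
    (a : ℕ → ℝ) (ha1 : ∀ n, 1 < a n) (hrec : ∀ n, a (n + 1) = g (a n))
    (hlim : Filter.Tendsto a Filter.atTop (nhds 1)) :
    Filter.Tendsto (fun n : ℕ => (1 / (n : ℝ)) * ((a n - 1) ^ 2)⁻¹)
      Filter.atTop (nhds (((d : ℝ) ^ 2 - 1) / (3 * (d : ℝ) ^ 2))) := by
  have hd0 : (d:ℝ) ≠ 0 := Nat.cast_ne_zero.mpr (by omega)
  have hd1 : (0:ℝ) < (d:ℝ) + 1 := by positivity
  have hq2 : (2:ℝ) ≤ (q:ℝ) := by exact_mod_cast hq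
  have hppos : 0 < p := by
    rw [hp]
    have : (q:ℝ)/((d:ℝ)+1) < 1 := (div_lt_one hd1).mpr hqd
    linarith
  have hs_pos : 0 < p + (q:ℝ) - 1 := by linarith
  have hsd : p + (q:ℝ) - 1 = (d:ℝ)*(1-p) := by
    rw [hp]; field_simp; ring
  set F : ℝ → ℝ := fun t => f (1+t) - 1 with hFdef
  have hF : ∀ t : ℝ, (p + (q:ℝ) - 1) + t ≠ 0 →
      F t = (((p + (q:ℝ) - 1) + (1 - (p + (q:ℝ) - 1)/(d:ℝ))*t)/((p + (q:ℝ) - 1)+t))^d - 1 := by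
    intro t ht
    rw [hFdef]
    simp only [hf]
    have h1 : p + ((q:ℝ)-2) + (1+t) = (p + (q:ℝ) - 1) + t := by ring
    have h2 : p*(1+t) + ((q:ℝ)-1) = (p + (q:ℝ) - 1) + (1 - (p+(q:ℝ)-1)/(d:ℝ))*t := by
      have hh : (p + (q:ℝ) - 1)/(d:ℝ) = 1 - p := by rw [hsd]; field_simp
      rw [hh]; ring
    rw [h1, h2]
  have hcore := ffir_core d hd (p + (q:ℝ) - 1) hs_pos F hF
  have hta : Tendsto (fun n => a n - 1) atTop (nhdsWithin 0 {(0:ℝ)}ᶜ) := by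
    rw [tendsto_nhdsWithin_iff]
    constructor
    · have := hlim.sub_const 1
      simpa using this
    · filter_upwards with n
      simpa using (ne_of_gt (sub_pos.mpr (ha1 n)))
  have hcomp : Tendsto (fun n => ((F (F (a n - 1)))^2)⁻¹ - ((a n - 1)^2)⁻¹) atTop
      (𝓝 (((d:ℝ)^2 - 1)/(3*(d:ℝ)^2))) := hcore.comp hta
  have hFF : ∀ n, F (F (a n - 1)) = a (n+1) - 1 := by
    intro n
    have e1 : (1:ℝ) + (a n - 1) = a n := by ring
    have e2 : F (a n - 1) = f (a n) - 1 := by rw [hFdef]; simp only; rw [e1]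
    have e3 : (1:ℝ) + (f (a n) - 1) = f (a n) := by ring
    rw [e2, hFdef]
    simp only
    rw [e3, hrec n, hg]
    simp [Function.comp]
  have hdiff : Tendsto (fun n => ((a (n+1) - 1)^2)⁻¹ - ((a n - 1)^2)⁻¹) atTop
      (𝓝 (((d:ℝ)^2 - 1)/(3*(d:ℝ)^2))) := by
    refine hcomp.congr (fun n => ?_)
    rw [hFF n]
  have hc := hdiff.cesaro
  have hsum : ∀ n, ∑ i ∈ Finset.range n, (((a (i+1) - 1)^2)⁻¹ - ((a i - 1)^2)⁻¹)
      = ((a n - 1)^2)⁻¹ - ((a 0 - 1)^2)⁻¹ :=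
    fun n => Finset.sum_range_sub (fun i => ((a i - 1)^2)⁻¹) n
  have hc2 : Tendsto (fun n : ℕ => (n:ℝ)⁻¹ * (((a n - 1)^2)⁻¹ - ((a 0 - 1)^2)⁻¹)) atTop
      (𝓝 (((d:ℝ)^2 - 1)/(3*(d:ℝ)^2))) := by
    refine hc.congr (fun n => ?_)
    rw [hsum n]
  have hz : Tendsto (fun n : ℕ => (n:ℝ)⁻¹ * ((a 0 - 1)^2)⁻¹) atTop (𝓝 0) := by
    have h1 : Tendsto (fun n : ℕ => (n:ℝ)⁻¹) atTop (𝓝 0) := tendsto_inv_atTop_nhds_zero_nat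
    simpa using h1.mul_const (((a 0 - 1)^2)⁻¹)
  have hfin := hc2.add hz
  norm_num at hfin
  refine hfin.congr (fun n => ?_)
  rw [one_div]
  ring
end

section
/- For p ∈ [1 - q/(d+1), 1) ∩ (0,1), integers d ≥ 1 and 1 ≤ m ≤ q-1, and all x ≥ 1, the derivative of f_m ∘ f_m (with f_m(x) = ((B + (m-1+p)(x-1))/(B + m(x-1)))^d, B = p+q-1) satisfies 0 < (f_m ∘ f_m)'(x) ≤ (d(1-p)/(p+q-1))². -/
lemma Qlem (n : ℕ) (x : ℝ) (hx : 0 ≤ x) : x^n*((n:ℝ)+1-(n:ℝ)*x) ≤ 1 := by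
  induction n with
  | zero => norm_num
  | succ k ih =>
    have h3 : 0 ≤ ((k:ℝ)+1)*(x^k*(x-1)^2) := by positivity
    have hid : x^(k+1)*((((k:ℕ)+1:ℕ):ℝ)+1-(((k:ℕ)+1:ℕ):ℝ)*x)
        = x^k*((k:ℝ)+1-(k:ℝ)*x) - ((k:ℝ)+1)*(x^k*(x-1)^2) := by
      push_cast
      rw [pow_succ]
      ring
    rw [hid]
    linarith [ih]

lemma Rlem (n : ℕ) (x c : ℝ) (hx : 0 ≤ x) (hc : 0 ≤ c) :
    x^n*(((n:ℝ)+1)*c - (n:ℝ)*x) ≤ c^(n+1) := by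
  induction n with
  | zero => norm_num
  | succ k ih =>
    have h3 : 0 ≤ ((k:ℝ)+1)*(x^k*(x-c)^2) := by positivity
    have hid : x^(k+1)*((((((k:ℕ)+1:ℕ)):ℝ)+1)*c - ((((k:ℕ)+1:ℕ)):ℝ)*x)
        = (x^k*(((k:ℝ)+1)*c - (k:ℝ)*x))*c - ((k:ℝ)+1)*(x^k*(x-c)^2) := by
      push_cast
      rw [pow_succ]
      ring
    have h4 : (x^k*(((k:ℝ)+1)*c - (k:ℝ)*x))*c ≤ c^(k+1)*c :=
      mul_le_mul_of_nonneg_right ih hc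
    have h5 : c^(k+1)*c = c^(k+1+1) := by rw [← pow_succ]
    rw [hid]
    linarith

lemma amgm (n : ℕ) (x y c : ℝ) (hx : 0 ≤ x) (hy : 0 ≤ y) (hc : 0 ≤ c)
    (h : (n:ℝ)*x + y ≤ ((n:ℝ)+1)*c) : x^n*y ≤ c^(n+1) := by
  have h1 : x^n*y ≤ x^n*(((n:ℝ)+1)*c - (n:ℝ)*x) :=
    mul_le_mul_of_nonneg_left (by linarith) (pow_nonneg hx n)
  exact le_trans h1 (Rlem n x c hx hc)

lemma geom_bound (n : ℕ) (G : ℝ) (h0 : 0 ≤ G) (h1 : G ≤ 1) :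
    2*(∑ i ∈ Finset.range n, G^i) + ((n:ℝ)-1)*(1-G^n) ≤ 2*n := by
  induction n with
  | zero => simp
  | succ k ih =>
    rw [Finset.sum_range_succ]
    have hQ := Qlem k G h0
    have hps : G^(k+1) = G^k*G := pow_succ G k
    push_cast
    rw [hps]
    push_cast at ih
    nlinarith [ih, hQ]

lemma core_abs (e : ℕ) (α β G u T : ℝ) (hα0 : 0 ≤ α) (hα1 : α < 1) (hβ0 : 0 ≤ β)
    (hβ1 : β ≤ 1) (hc : ((e:ℝ)+1)*β*(1-α) ≤ 1) (hGa : α ≤ G) (hG1 : G ≤ 1)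
    (hu0 : 0 ≤ u) (hu1 : u ≤ 1) (hTu : (1-G)*T = u) (hT0 : 0 ≤ T)
    (hTe : T ≤ (e:ℝ)+1) (ht4 : 2*T + (e:ℝ)*u ≤ 2*((e:ℝ)+1)) :
    G^e*(G-α)^2*(1-α*β*u)^e ≤ (1-α)^2*(1-β*u)^(e+2) := by
  have h1α : (0:ℝ) < 1-α := by linarith
  have hG0 : 0 ≤ G := le_trans hα0 hGa
  have h1G : 0 ≤ 1-G := by linarith
  have hGT : G*T = T - u := by linear_combination -hTu
  have hR0 : (0:ℝ) ≤ 1+(e:ℝ)*(1-α) := by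
    have : (0:ℝ) ≤ (e:ℝ)*(1-α) := mul_nonneg (Nat.cast_nonneg e) h1α.le
    linarith
  -- step ii
  have hii : 2*(((e:ℝ)+1)*(β*(1-α)))*α ≤ 1+(e:ℝ)*(1-α) := by
    rcases le_total (((e:ℝ)+2)*(1-α)) 1 with h|h
    · have hba : β*α ≤ 1 := mul_le_one₀ hβ1 hα0 hα1.le
      have h2 : 2*(((e:ℝ)+1)*(1-α))*(β*α) ≤ 2*(((e:ℝ)+1)*(1-α))*1 :=
        mul_le_mul_of_nonneg_left hba (by positivity)
      linarith [h2, h]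
    · have h2 : (((e:ℝ)+1)*β*(1-α))*(2*α) ≤ 1*(2*α) :=
        mul_le_mul_of_nonneg_right hc (by linarith)
      linarith [h2, h]
  -- main inequality
  have hmain : β*(1-α)*(T*(1+(e:ℝ)*(1-α)) + (e:ℝ)*u*α) ≤ 1+(e:ℝ)*(1-α) := by
    have hTnn : 0 ≤ T*(1+(e:ℝ)*(1-α)) := mul_nonneg hT0 hR0
    have h1 : (((e:ℝ)+1)*β*(1-α))*(T*(1+(e:ℝ)*(1-α))) ≤ 1*(T*(1+(e:ℝ)*(1-α))) :=
      mul_le_mul_of_nonneg_right hc hTnn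
    have h2T : (2*T)*(1+(e:ℝ)*(1-α)) ≤ (2*((e:ℝ)+1) - (e:ℝ)*u)*(1+(e:ℝ)*(1-α)) :=
      mul_le_mul_of_nonneg_right (by linarith) hR0
    have heu : 0 ≤ (e:ℝ)*u := mul_nonneg (Nat.cast_nonneg e) hu0
    have h2 : ((e:ℝ)*u)*(2*(((e:ℝ)+1)*(β*(1-α)))*α) ≤ ((e:ℝ)*u)*(1+(e:ℝ)*(1-α)) :=
      mul_le_mul_of_nonneg_left hii heu
    have hkey : (2*((e:ℝ)+1))*(β*(1-α)*(T*(1+(e:ℝ)*(1-α)) + (e:ℝ)*u*α))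
        ≤ (2*((e:ℝ)+1))*(1+(e:ℝ)*(1-α)) := by linarith [h1, h2T, h2]
    exact le_of_mul_le_mul_left hkey (by positivity)
  -- spade
  have hspade : β*(1-α)*(u*(((e:ℝ)+1)-(e:ℝ)*α*G)) ≤ (1-G)*(1+(e:ℝ)*(1-α)) := by
    have hid1 : β*(1-α)*(u*(((e:ℝ)+1)-(e:ℝ)*α*G))
        = (1-G)*(β*(1-α)*(T*(((e:ℝ)+1)-(e:ℝ)*α*G))) := by
      linear_combination (-(β*(1-α)*(((e:ℝ)+1)-(e:ℝ)*α*G)))*hTu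
    have hid2 : T*(((e:ℝ)+1)-(e:ℝ)*α*G) = T*(1+(e:ℝ)*(1-α)) + (e:ℝ)*u*α := by
      linear_combination (-(e:ℝ)*α)*hGT
    calc β*(1-α)*(u*(((e:ℝ)+1)-(e:ℝ)*α*G))
        = (1-G)*(β*(1-α)*(T*(((e:ℝ)+1)-(e:ℝ)*α*G))) := hid1
      _ = (1-G)*(β*(1-α)*(T*(1+(e:ℝ)*(1-α)) + (e:ℝ)*u*α)) := by rw [hid2]
      _ ≤ (1-G)*(1+(e:ℝ)*(1-α)) := mul_le_mul_of_nonneg_left hmain h1G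
  have hW0 : 0 ≤ 1-β*u := by
    have : β*u ≤ 1 := mul_le_one₀ hβ1 hu0 hu1
    linarith
  have hV0 : 0 ≤ 1-α*β*u := by
    have h1 : α*β ≤ 1 := mul_le_one₀ hα1.le hβ0 hβ1
    have h2 : (α*β)*u ≤ 1 := mul_le_one₀ h1 hu0 hu1
    linarith [h2]
  -- club
  have hclub : (e:ℝ)*(G*(1-α*β*u))*(1-α) + (G-α) ≤ ((e:ℝ)+1)*((1-β*u)*(1-α)) := by
    have hident : ((e:ℝ)+1)*((1-β*u)*(1-α)) - ((e:ℝ)*(G*(1-α*β*u))*(1-α) + (G-α))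
        = (1-G)*(1+(e:ℝ)*(1-α)) - β*(1-α)*(u*(((e:ℝ)+1)-(e:ℝ)*α*G)) := by
      ring
    linarith [hspade, hident]
  -- diamond via amgm
  have hGV0 : 0 ≤ G*(1-α*β*u) := mul_nonneg hG0 hV0
  have hGα0 : 0 ≤ G-α := by linarith
  have hyd : 0 ≤ (G-α)/(1-α) := div_nonneg hGα0 h1α.le
  have hsum : (e:ℝ)*(G*(1-α*β*u)) + (G-α)/(1-α) ≤ ((e:ℝ)+1)*(1-β*u) := by
    have h5 : ((e:ℝ)*(G*(1-α*β*u)) + (G-α)/(1-α))*(1-α) ≤ (((e:ℝ)+1)*(1-β*u))*(1-α) := by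
      have hdc : ((G-α)/(1-α))*(1-α) = G-α := div_mul_cancel₀ _ (ne_of_gt h1α)
      calc ((e:ℝ)*(G*(1-α*β*u)) + (G-α)/(1-α))*(1-α)
          = (e:ℝ)*(G*(1-α*β*u))*(1-α) + ((G-α)/(1-α))*(1-α) := by ring
        _ = (e:ℝ)*(G*(1-α*β*u))*(1-α) + (G-α) := by rw [hdc]
        _ ≤ ((e:ℝ)+1)*((1-β*u)*(1-α)) := hclub
        _ = (((e:ℝ)+1)*(1-β*u))*(1-α) := by ring
    exact le_of_mul_le_mul_right h5 h1α
  have hamgm : (G*(1-α*β*u))^e*((G-α)/(1-α)) ≤ (1-β*u)^(e+1) :=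
    amgm e (G*(1-α*β*u)) _ (1-β*u) hGV0 hyd hW0 hsum
  have hdiam : (G*(1-α*β*u))^e*(G-α) ≤ (1-α)*(1-β*u)^(e+1) := by
    have h6 : ((G*(1-α*β*u))^e*((G-α)/(1-α)))*(1-α) ≤ (1-β*u)^(e+1)*(1-α) :=
      mul_le_mul_of_nonneg_right hamgm h1α.le
    have h7 : ((G*(1-α*β*u))^e*((G-α)/(1-α)))*(1-α) = (G*(1-α*β*u))^e*(G-α) := by
      field_simp
    linarith [h6, h7]
  -- G-α ≤ (1-α)*W
  have hGαW : G-α ≤ (1-α)*(1-β*u) := by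
    have hTu' : u ≤ (1-G)*((e:ℝ)+1) := by
      rw [← hTu]
      exact mul_le_mul_of_nonneg_left hTe h1G
    have hA1 : ((1-α)*β)*u ≤ ((1-α)*β)*((1-G)*((e:ℝ)+1)) :=
      mul_le_mul_of_nonneg_left hTu' (mul_nonneg h1α.le hβ0)
    have hA2 : ((1-α)*β)*((1-G)*((e:ℝ)+1)) ≤ 1*(1-G) := by
      calc ((1-α)*β)*((1-G)*((e:ℝ)+1)) = (((e:ℝ)+1)*β*(1-α))*(1-G) := by ring
        _ ≤ 1*(1-G) := mul_le_mul_of_nonneg_right hc h1G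
    linarith [hA1, hA2]
  -- final
  have hfin : G^e*(G-α)^2*(1-α*β*u)^e = ((G*(1-α*β*u))^e*(G-α))*(G-α) := by
    rw [mul_pow]; ring
  have h8 : 0 ≤ (1-α)*(1-β*u)^(e+1) := mul_nonneg h1α.le (pow_nonneg hW0 _)
  calc G^e*(G-α)^2*(1-α*β*u)^e = ((G*(1-α*β*u))^e*(G-α))*(G-α) := hfin
    _ ≤ ((1-α)*(1-β*u)^(e+1))*((1-α)*(1-β*u)) := mul_le_mul hdiam hGαW hGα0 h8
    _ = (1-α)^2*(1-β*u)^(e+2) := by ring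

lemma core (e : ℕ) (α β G : ℝ) (hα0 : 0 ≤ α) (hα1 : α < 1) (hβ0 : 0 ≤ β)
    (hβ1 : β ≤ 1) (hc : ((e:ℝ)+1)*β*(1-α) ≤ 1) (hGa : α ≤ G) (hG1 : G ≤ 1) :
    G^e*(G-α)^2*(1-α*β*(1-G^(e+1)))^e ≤ (1-α)^2*(1-β*(1-G^(e+1)))^(e+2) := by
  have hG0 : 0 ≤ G := le_trans hα0 hGa
  refine core_abs e α β G (1-G^(e+1)) (∑ i ∈ Finset.range (e+1), G^i)
    hα0 hα1 hβ0 hβ1 hc hGa hG1 ?_ ?_ ?_ ?_ ?_ ?_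
  · have := pow_le_one₀ hG0 hG1 (n := e+1)
    linarith
  · have := pow_nonneg hG0 (e+1)
    linarith
  · have h := geom_sum_mul G (e+1)
    linear_combination -h
  · exact Finset.sum_nonneg fun i _ => pow_nonneg hG0 i
  · calc (∑ i ∈ Finset.range (e+1), G^i) ≤ ∑ i ∈ Finset.range (e+1), (1:ℝ) :=
          Finset.sum_le_sum (fun i _ => pow_le_one₀ hG0 hG1)
      _ = (e:ℝ)+1 := by simp
  · have h := geom_bound (e+1) G hG0 hG1
    push_cast at h
    linarith

set_option maxHeartbeats 1600000 in
theorem fmfm_deriv_bounds (d q m : ℕ) (hd : 1 ≤ d) (hq : 2 ≤ q)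
    (hm1 : 1 ≤ m) (hmq : m ≤ q - 1)
    (p : ℝ) (hp0 : 0 < p) (hp1 : p < 1) (hpc : 1 - (q : ℝ) / ((d : ℝ) + 1) ≤ p)
    (B : ℝ) (hB : B = p + (q : ℝ) - 1)
    (fm : ℝ → ℝ)
    (hfm : ∀ x : ℝ, fm x =
      ((B + ((m : ℝ) - 1 + p) * (x - 1)) / (B + (m : ℝ) * (x - 1))) ^ d) :
    ∀ x : ℝ, 1 ≤ x →
      0 < deriv (fm ∘ fm) x ∧
      deriv (fm ∘ fm) x ≤ ((d : ℝ) * (1 - p) / (p + (q : ℝ) - 1)) ^ 2 := by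
  obtain ⟨e, rfl⟩ : ∃ e, d = e + 1 := ⟨d - 1, (Nat.succ_pred_eq_of_pos hd).symm⟩
  set a : ℝ := (m : ℝ) - 1 + p with ha
  -- basic facts
  have hq2 : (2:ℝ) ≤ (q:ℝ) := by exact_mod_cast hq
  have hm0 : (0:ℝ) < (m:ℝ) := by exact_mod_cast hm1
  have hB0 : 0 < B := by rw [hB]; linarith
  have hm1' : (1:ℝ) ≤ (m:ℝ) := by exact_mod_cast hm1
  have ha0 : 0 < a := by rw [ha]; linarith
  have ham : a < (m:ℝ) := by rw [ha]; linarith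
  have hmq' : (m:ℝ) ≤ (q:ℝ) - 1 := by
    have h := (Nat.cast_le (α := ℝ)).mpr hmq
    rwa [Nat.cast_sub (by omega : 1 ≤ q), Nat.cast_one] at h
  have hmB : (m:ℝ) < B := by rw [hB]; linarith
  have hdB : ((e:ℝ)+1)*(1-p) ≤ B := by
    have hd1 : (0:ℝ) < ((e+1:ℕ):ℝ) + 1 := by positivity
    have h2 : (1 - p) * (((e+1:ℕ):ℝ) + 1) ≤ (q:ℝ) := by
      have h3 : 1 - p ≤ (q:ℝ) / (((e+1:ℕ):ℝ) + 1) := by linarith [hpc]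
      calc (1 - p) * (((e+1:ℕ):ℝ) + 1) ≤ ((q:ℝ) / (((e+1:ℕ):ℝ) + 1)) * (((e+1:ℕ):ℝ) + 1) :=
            mul_le_mul_of_nonneg_right h3 hd1.le
        _ = (q:ℝ) := div_mul_cancel₀ _ (ne_of_gt hd1)
    push_cast at h2
    rw [hB]
    linarith [h2]
  -- derivative lemma
  have hDer : ∀ z : ℝ, (B + (m:ℝ)*(z-1)) ≠ 0 → HasDerivAt fm
      (((e:ℝ)+1) * ((B + a*(z-1))/(B + (m:ℝ)*(z-1)))^e *
        (-((1-p)*B)/(B + (m:ℝ)*(z-1))^2)) z := by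
    intro z hz
    have h1 : HasDerivAt (fun w : ℝ => B + a*(w-1)) a z := by
      have h := (((hasDerivAt_id z).sub_const 1).const_mul a).const_add B
      simpa using h
    have h2 : HasDerivAt (fun w : ℝ => B + (m:ℝ)*(w-1)) (m:ℝ) z := by
      have h := (((hasDerivAt_id z).sub_const 1).const_mul (m:ℝ)).const_add B
      simpa using h
    have h3 := (h1.div h2 hz).pow (e+1)
    have hfun : fm = fun w => ((B + a*(w-1))/(B + (m:ℝ)*(w-1)))^(e+1) := funext hfm
    rw [hfun]
    have hval : (((e+1:ℕ)):ℝ) * ((B + a*(z-1))/(B + (m:ℝ)*(z-1)))^(e+1-1) *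
        ((a * (B + (m:ℝ)*(z-1)) - (B + a*(z-1)) * (m:ℝ)) / (B + (m:ℝ)*(z-1))^2)
        = ((e:ℝ)+1) * ((B + a*(z-1))/(B + (m:ℝ)*(z-1)))^e *
          (-((1-p)*B)/(B + (m:ℝ)*(z-1))^2) := by
      have hnum : a * (B + (m:ℝ)*(z-1)) - (B + a*(z-1)) * (m:ℝ) = -((1-p)*B) := by
        rw [ha]; ring
      rw [hnum, Nat.add_sub_cancel]
      push_cast
      ring
    rw [← hval]
    exact h3
  intro x hx
  have hx1 : 0 ≤ x - 1 := by linarith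
  have hDx : 0 < B + (m:ℝ)*(x-1) := by linarith [mul_nonneg hm0.le hx1]
  have hNx : 0 < B + a*(x-1) := by linarith [mul_nonneg ha0.le hx1]
  have hNDx : B + a*(x-1) ≤ B + (m:ℝ)*(x-1) := by linarith [mul_le_mul_of_nonneg_right ham.le hx1]
  set y : ℝ := fm x with hydef
  have hy : y = ((B + a*(x-1))/(B + (m:ℝ)*(x-1)))^(e+1) := hfm x
  have hGpos : 0 < (B + a*(x-1))/(B + (m:ℝ)*(x-1)) := div_pos hNx hDx
  have hG1 : (B + a*(x-1))/(B + (m:ℝ)*(x-1)) ≤ 1 := (div_le_one hDx).mpr hNDx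
  have hy0 : 0 < y := by rw [hy]; exact pow_pos hGpos _
  have hy1 : y ≤ 1 := by rw [hy]; exact pow_le_one₀ hGpos.le hG1
  have hDy : 0 < B + (m:ℝ)*(y-1) := by
    have h := mul_pos hm0 hy0
    have : (m:ℝ)*(y-1) = (m:ℝ)*y - (m:ℝ) := by ring
    rw [hB]; linarith [hmq']
  have hNy : 0 < B + a*(y-1) := by
    have h := mul_pos ha0 hy0
    have h2 : a*(y-1) = a*y - a := by ring
    rw [hB, ha] at *
    linarith [hmq']
  -- derivative of composition
  have hcomp := (hDer y (ne_of_gt hDy)).comp x (hDer x (ne_of_gt hDx))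
  have hdrv : deriv (fm ∘ fm) x =
      (((e:ℝ)+1) * ((B + a*(y-1))/(B + (m:ℝ)*(y-1)))^e *
        (-((1-p)*B)/(B + (m:ℝ)*(y-1))^2)) *
      (((e:ℝ)+1) * ((B + a*(x-1))/(B + (m:ℝ)*(x-1)))^e *
        (-((1-p)*B)/(B + (m:ℝ)*(x-1))^2)) := hcomp.deriv
  have hp1' : 0 < 1 - p := by linarith
  constructor
  · rw [hdrv]
    have hnum : -((1-p)*B) < 0 := by
      have := mul_pos hp1' hB0
      linarith
    apply mul_pos_of_neg_of_neg
    · exact mul_neg_of_pos_of_neg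
        (mul_pos (by positivity) (pow_pos (div_pos hNy hDy) e))
        (div_neg_of_neg_of_pos hnum (pow_pos hDy 2))
    · exact mul_neg_of_pos_of_neg
        (mul_pos (by positivity) (pow_pos (div_pos hNx hDx) e))
        (div_neg_of_neg_of_pos hnum (pow_pos hDx 2))
  · -- the bound
    rw [hdrv, ← hB]
    -- core application
    have hα0 : 0 ≤ a/(m:ℝ) := by positivity
    have hα1 : a/(m:ℝ) < 1 := (div_lt_one hm0).mpr ham
    have hβ0 : 0 ≤ (m:ℝ)/B := by positivity
    have hβ1 : (m:ℝ)/B ≤ 1 := (div_le_one hB0).mpr hmB.le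
    have hcc : ((e:ℝ)+1)*((m:ℝ)/B)*(1-a/(m:ℝ)) ≤ 1 := by
      have heq : ((e:ℝ)+1)*((m:ℝ)/B)*(1-a/(m:ℝ)) = ((e:ℝ)+1)*(1-p)/B := by
        rw [ha]; field_simp; ring
      rw [heq, div_le_one hB0]
      exact hdB
    have hGa : a/(m:ℝ) ≤ (B + a*(x-1))/(B + (m:ℝ)*(x-1)) := by
      rw [div_le_div_iff₀ hm0 hDx]
      nlinarith [mul_pos (sub_pos.mpr ham) hB0]
    have key := core e (a/(m:ℝ)) ((m:ℝ)/B) ((B + a*(x-1))/(B + (m:ℝ)*(x-1)))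
      hα0 hα1 hβ0 hβ1 hcc hGa hG1
    rw [← hy] at key
    have eA : (1:ℝ) - a/(m:ℝ)*((m:ℝ)/B)*(1-y) = (B + a*(y-1))/B := by
      field_simp; ring
    have eB : (1:ℝ) - (m:ℝ)/B*(1-y) = (B + (m:ℝ)*(y-1))/B := by
      field_simp; ring
    have eC : (B + a*(x-1))/(B + (m:ℝ)*(x-1)) - a/(m:ℝ)
        = (1-p)*B/((m:ℝ)*(B + (m:ℝ)*(x-1))) := by
      rw [ha]; field_simp; ring
    have eD : (1:ℝ) - a/(m:ℝ) = (1-p)/(m:ℝ) := by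
      rw [ha]; field_simp; ring
    rw [eA, eB, eC, eD] at key
    -- derive polynomial inequality
    simp only [div_pow] at key
    rw [div_mul_div_comm, div_mul_div_comm, div_mul_div_comm] at key
    rw [div_le_div_iff₀ (by positivity) (by positivity)] at key
    have hfin : B^4*((B + a*(x-1))^e*(B + a*(y-1))^e)
        ≤ (B + (m:ℝ)*(x-1))^(e+2)*(B + (m:ℝ)*(y-1))^(e+2) := by
      have hP : (0:ℝ) < (1-p)^2*(m:ℝ)^2*B^e := by positivity
      refine le_of_mul_le_mul_left ?_ hP
      calc (1-p)^2*(m:ℝ)^2*B^e*(B^4*((B + a*(x-1))^e*(B + a*(y-1))^e))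
          = (B + a*(x-1))^e * ((1-p)*B)^2 * (B + a*(y-1))^e * ((m:ℝ)^2*B^(e+2)) := by
            ring
        _ ≤ (1-p)^2 * (B + (m:ℝ)*(y-1))^(e+2) *
            ((B + (m:ℝ)*(x-1))^e*((m:ℝ)*(B + (m:ℝ)*(x-1)))^2*B^e) := key
        _ = (1-p)^2*(m:ℝ)^2*B^e*((B + (m:ℝ)*(x-1))^(e+2)*(B + (m:ℝ)*(y-1))^(e+2)) := by
            ring
    -- conclude
    have hEq : (((e:ℝ)+1) * ((B + a*(y-1))/(B + (m:ℝ)*(y-1)))^e *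
        (-((1-p)*B)/(B + (m:ℝ)*(y-1))^2)) *
      (((e:ℝ)+1) * ((B + a*(x-1))/(B + (m:ℝ)*(x-1)))^e *
        (-((1-p)*B)/(B + (m:ℝ)*(x-1))^2))
        = ((((e+1:ℕ)):ℝ)*(1-p)/B)^2 *
          ((B^4*((B + a*(x-1))^e*(B + a*(y-1))^e))/
            ((B + (m:ℝ)*(x-1))^(e+2)*(B + (m:ℝ)*(y-1))^(e+2))) := by
      push_cast
      rw [div_pow, div_pow, div_pow]
      field_simp [hDy.ne', hDx.ne', hB0.ne']
      ring
    rw [hEq]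
    have hQ1 : (B^4*((B + a*(x-1))^e*(B + a*(y-1))^e))/
        ((B + (m:ℝ)*(x-1))^(e+2)*(B + (m:ℝ)*(y-1))^(e+2)) ≤ 1 :=
      (div_le_one (by positivity)).mpr hfin
    calc ((((e+1:ℕ)):ℝ)*(1-p)/B)^2 *
          ((B^4*((B + a*(x-1))^e*(B + a*(y-1))^e))/
            ((B + (m:ℝ)*(x-1))^(e+2)*(B + (m:ℝ)*(y-1))^(e+2)))
        ≤ ((((e+1:ℕ)):ℝ)*(1-p)/B)^2 * 1 := mul_le_mul_of_nonneg_left hQ1 (by positivity)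
      _ = ((((e+1:ℕ)):ℝ)*(1-p)/B)^2 := mul_one _
end

section
/- Let p ∈ [1 - q/(d+1), 1) ∩ (0,1) and define f(x) = ((p·x + (q-1))/(p + (q-2) + x))^d. Then the sequence defined by r_0 ≥ 1 arbitrary and r_{n+1} = f(r_n) converges to 1. -/
set_option maxHeartbeats 1000000

open Filter Real


/-- AM-GM-ish: `y^(d+1) + d ≥ (d+1) y` for `y ≥ 0` (in fact all `y ≥ -1`). -/
private lemma aux_v (d : ℕ) (y : ℝ) (h0 : -1 ≤ y) :
    ((d : ℝ) + 1) * y ≤ y ^ (d + 1) + d := by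
  have h := one_add_mul_le_pow (a := y - 1) (by linarith) (d + 1)
  have : (1 : ℝ) + (d + 1 : ℕ) * (y - 1) ≤ (1 + (y - 1)) ^ (d + 1) := h
  push_cast at this
  have e : (1 : ℝ) + (y - 1) = y := by ring
  rw [e] at this
  linarith

/-- Key power inequality: `d * y^d * (1 - y²) ≤ y * (1 - (y^d)²)` for `y ∈ [0,1]`. -/
private lemma aux_pow (d : ℕ) (y : ℝ) (h0 : 0 ≤ y) (h1 : y ≤ 1) :
    (d : ℝ) * y ^ d * (1 - y ^ 2) ≤ y * (1 - (y ^ d) ^ 2) := by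
  induction d with
  | zero => simp
  | succ n ih =>
    have hv : ((n : ℝ) + 1) * y ≤ y ^ (n + 1) + n := aux_v n y (by linarith)
    have hyn : (0 : ℝ) ≤ y ^ n := pow_nonneg h0 n
    have hy2 : (0 : ℝ) ≤ 1 - y ^ 2 := by nlinarith
    have hprod : 0 ≤ (1 - y ^ 2) * y ^ n * (y ^ (n + 1) - ((n : ℝ) + 1) * y + n) := by
      apply mul_nonneg (mul_nonneg hy2 hyn); linarith
    have hid : y * (1 - (y ^ (n + 1)) ^ 2) - ((n : ℝ) + 1) * y ^ (n + 1) * (1 - y ^ 2)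
        = (y * (1 - (y ^ n) ^ 2) - (n : ℝ) * y ^ n * (1 - y ^ 2))
          + (1 - y ^ 2) * y ^ n * (y ^ (n + 1) - ((n : ℝ) + 1) * y + n) := by
      ring
    push_cast
    nlinarith [ih, hprod]


/-- Core algebraic inequality with `Y` abstract. -/
private lemma wstar_core (D p m y Y : ℝ) (hp0 : 0 < p) (hp1 : p < 1)
    (hm : m = 1 ∨ 2 ≤ m) (hD1 : 1 ≤ D) (hcon : D * (1 - p) ≤ p + m)
    (hy0 : 0 < y) (hy1 : y < 1) (hY0 : 0 < Y) (hY1 : Y < 1) (hYy : Y ≤ y)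
    (hkey : D * Y * (1 - y ^ 2) ≤ y * (1 - Y ^ 2))
    (hstrict : D = 1 ∨ Y < y) :
    D ^ 2 * (y - p) * (m - (p + m - 1) * y) * Y
      < y * (p * Y + m) * (Y + (p + m - 1)) := by
  have hm1 : (1 : ℝ) ≤ m := by rcases hm with h | h <;> linarith
  have hdb : 0 ≤ D * (1 - p) := by nlinarith
  rcases hm with hm2 | hm2
  · -- m = 1 case
    subst hm2
    have hc : D ^ 2 * (1 - p) ^ 2 ≤ (1 + p) ^ 2 := by nlinarith
    have h1 : 0 ≤ ((1 + p) ^ 2 - D ^ 2 * (1 - p) ^ 2) * (y * Y) := by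
      apply mul_nonneg (by linarith) (by positivity)
    have h2 : 0 < p * y * (1 - Y) ^ 2 :=
      mul_pos (mul_pos hp0 hy0) (pow_pos (by linarith) 2)
    have h3 : 0 ≤ p * D ^ 2 * Y * (1 - y) ^ 2 := by positivity
    nlinarith [h1, h2, h3]
  · -- 2 ≤ m case
    have ht3 : 0 ≤ D ^ 2 * (1 + p) * (m + (p + m - 1)) * ((1 - y) ^ 2 * Y) := by
      have h1 : (0:ℝ) < m + (p + m - 1) := by linarith
      positivity
    have ht4 : 0 ≤ (m - p) * ((p + m - 1) - 1) * ((1 - Y) ^ 2 * y) := by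
      apply mul_nonneg (mul_nonneg (by linarith) (by linarith)) (by positivity)
    have ht2 : 0 ≤ (m - 1) * ((m + p) * (y * (1 - Y ^ 2)) - D ^ 2 * (1 - p) * (Y * (1 - y ^ 2))) := by
      apply mul_nonneg (by linarith)
      have h0 : 0 ≤ y * (1 - Y ^ 2) := by nlinarith
      have hstep : D * (1 - p) * (D * Y * (1 - y ^ 2)) ≤ D * (1 - p) * (y * (1 - Y ^ 2)) :=
        mul_le_mul_of_nonneg_left hkey hdb
      have hstep2 : D * (1 - p) * (y * (1 - Y ^ 2)) ≤ (m + p) * (y * (1 - Y ^ 2)) := by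
        apply mul_le_mul_of_nonneg_right _ h0
        linarith
      nlinarith
    have ht1 : 0 < ((p + m) ^ 2 - D ^ 2 * (1 - p) ^ 2) * (y * (1 + Y) ^ 2)
        + D ^ 2 * (1 - p) ^ 2 * ((y - Y) * (1 - y * Y)) := by
      have hsq : 0 ≤ (p + m) ^ 2 - D ^ 2 * (1 - p) ^ 2 := by
        have h0 := mul_le_mul hcon hcon hdb (by linarith : (0:ℝ) ≤ p + m)
        nlinarith [h0]
      have hyY : 0 ≤ (y - Y) * (1 - y * Y) := by
        apply mul_nonneg (by linarith); nlinarith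
      rcases hstrict with hdeq | hYlt
      · subst hdeq
        have h1 : 0 < (p + m) ^ 2 - 1 ^ 2 * (1 - p) ^ 2 := by
          nlinarith [mul_pos (show (0:ℝ) < 2 * p + m - 1 by linarith)
            (show (0:ℝ) < m + 1 by linarith)]
        have h2 : 0 < y * (1 + Y) ^ 2 := by positivity
        have h3 := mul_pos h1 h2
        have h4 : 0 ≤ 1 ^ 2 * (1 - p) ^ 2 * ((y - Y) * (1 - y * Y)) := by
          apply mul_nonneg (by positivity) hyY
        linarith
      · have h1 : 0 < (y - Y) * (1 - y * Y) := by
          apply mul_pos (by linarith); nlinarith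
        have h2 : 0 ≤ ((p + m) ^ 2 - D ^ 2 * (1 - p) ^ 2) * (y * (1 + Y) ^ 2) := by
          apply mul_nonneg hsq (by positivity)
        have h3 : 0 < D ^ 2 * (1 - p) ^ 2 := mul_pos (pow_pos (by linarith) 2) (pow_pos (by linarith) 2)
        have h4 := mul_pos h3 h1
        linarith
    have hid : 4 * (y * (p * Y + m) * (Y + (p + m - 1))
          - D ^ 2 * (y - p) * (m - (p + m - 1) * y) * Y)
        = (((p + m) ^ 2 - D ^ 2 * (1 - p) ^ 2) * (y * (1 + Y) ^ 2)
            + D ^ 2 * (1 - p) ^ 2 * ((y - Y) * (1 - y * Y)))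
          + 2 * ((m - 1) * ((m + p) * (y * (1 - Y ^ 2)) - D ^ 2 * (1 - p) * (Y * (1 - y ^ 2))))
          + D ^ 2 * (1 + p) * (m + (p + m - 1)) * ((1 - y) ^ 2 * Y)
          + (m - p) * ((p + m - 1) - 1) * ((1 - Y) ^ 2 * y) := by
      ring
    linarith

private lemma wstar (d : ℕ) (hd : 1 ≤ d) (p m y : ℝ) (hp0 : 0 < p) (hp1 : p < 1)
    (hm : m = 1 ∨ 2 ≤ m) (hcon : (d : ℝ) * (1 - p) ≤ p + m)
    (hy0 : 0 < y) (hy1 : y < 1) :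
    (d : ℝ) ^ 2 * (y - p) * (m - (p + m - 1) * y) * y ^ d
      < y * (p * y ^ d + m) * (y ^ d + (p + m - 1)) := by
  have hd1 : (1 : ℝ) ≤ (d : ℝ) := by exact_mod_cast hd
  have hY0 : 0 < y ^ d := pow_pos hy0 d
  have hY1 : y ^ d < 1 := pow_lt_one₀ hy0.le hy1 (by omega)
  have hYy : y ^ d ≤ y := by
    have := pow_le_pow_of_le_one hy0.le hy1.le hd
    simpa using this
  have hstrict : (d : ℝ) = 1 ∨ y ^ d < y := by
    rcases Nat.lt_or_ge d 2 with h | h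
    · left; have : d = 1 := by omega
      simp [this]
    · right
      calc y ^ d ≤ y ^ 2 := pow_le_pow_of_le_one hy0.le hy1.le h
      _ < y := by nlinarith
  exact wstar_core d p m y (y ^ d) hp0 hp1 hm hd1 hcon hy0 hy1 hY0 hY1 hYy
    (aux_pow d y hy0.le hy1.le) hstrict


section
variable (d : ℕ) (p m : ℝ)

private lemma two_step (d : ℕ) (hd : 1 ≤ d) (p m : ℝ) (hp0 : 0 < p) (hp1 : p < 1)
    (hm : m = 1 ∨ 2 ≤ m) (hcon : (d : ℝ) * (1 - p) ≤ p + m) (f : ℝ → ℝ)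
    (hf : ∀ x : ℝ, f x = ((p * x + m) / (x + (p + m - 1))) ^ d) :
    ∀ x : ℝ, 1 < x → f (f x) < x := by
  have hm1 : (1 : ℝ) ≤ m := by rcases hm with h | h <;> linarith
  set c : ℝ := p + m - 1 with hc
  have hc0 : 0 < c := by simp only [hc]; linarith
  set σ : ℝ := (1 - p) * (p + m) with hσ
  have hσ0 : 0 < σ := by apply mul_pos <;> linarith
  have hd0 : (0 : ℝ) < d := by exact_mod_cast hd
  -- basic positivity
  have hden : ∀ x : ℝ, 0 < x → 0 < x + c := fun x hx => by linarith
  have hnum : ∀ x : ℝ, 0 < x → 0 < p * x + m := fun x hx => by nlinarith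
  have hfpos : ∀ x : ℝ, 0 < x → 0 < f x := fun x hx => by
    rw [hf]; exact pow_pos (div_pos (hnum x hx) (hden x hx)) d
  -- the weight function
  set w : ℝ → ℝ := fun t => (d : ℝ) * σ * t / ((p * t + m) * (t + c)) with hw
  -- key product inequality
  have hwprod : ∀ x : ℝ, 1 < x → w x * w (f x) < 1 := by
    intro x hx
    have hx0 : 0 < x := by linarith
    have hC : 0 < x + c := hden x hx0
    have hN : 0 < p * x + m := hnum x hx0
    have hy0 : 0 < (p * x + m) / (x + c) := div_pos hN hC
    have hy1 : (p * x + m) / (x + c) < 1 := by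
      rw [div_lt_one hC]; nlinarith
    have hW := wstar d hd p m _ hp0 hp1 hm hcon hy0 hy1
    have hC2 : (0 : ℝ) < (x + c) * (x + c) := mul_pos hC hC
    have hW2 := mul_lt_mul_of_pos_right hW hC2
    have hY0 : 0 < ((p * x + m) / (x + c)) ^ d := pow_pos hy0 d
    have hfx : f x = ((p * x + m) / (x + c)) ^ d := by rw [hf]
    set Y : ℝ := ((p * x + m) / (x + c)) ^ d with hY
    have hNY : 0 < p * Y + m := by nlinarith
    have hCY : 0 < Y + c := by linarith
    have eL : (d : ℝ) ^ 2 * ((p * x + m) / (x + c) - p) * (m - c * ((p * x + m) / (x + c)))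
        * Y * ((x + c) * (x + c)) = (d : ℝ) ^ 2 * σ ^ 2 * (x * Y) := by
      field_simp
      ring
    have eR : (p * x + m) / (x + c) * (p * Y + m) * (Y + c) * ((x + c) * (x + c))
        = (p * x + m) * (x + c) * ((p * Y + m) * (Y + c)) := by
      field_simp
    rw [eL, eR] at hW2
    -- now conclude
    rw [hfx, hw]
    simp only
    rw [div_mul_div_comm, div_lt_one (by positivity)]
    calc (d : ℝ) * σ * x * ((d : ℝ) * σ * Y) = (d : ℝ) ^ 2 * σ ^ 2 * (x * Y) := by ring
      _ < (p * x + m) * (x + c) * ((p * Y + m) * (Y + c)) := hW2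
  -- the log-coordinate map
  set H : ℝ → ℝ := fun ℓ => (d : ℝ) * (Real.log (p * Real.exp ℓ + m) - Real.log (Real.exp ℓ + c))
    with hH
  have hHderiv : ∀ ℓ : ℝ, HasDerivAt H (-(w (Real.exp ℓ))) ℓ := by
    intro ℓ
    have hE : 0 < Real.exp ℓ := Real.exp_pos ℓ
    have h1 : HasDerivAt (fun t : ℝ => p * Real.exp t + m) (p * Real.exp ℓ) ℓ :=
      ((Real.hasDerivAt_exp ℓ).const_mul p).add_const m
    have h2 : HasDerivAt (fun t : ℝ => Real.exp t + c) (Real.exp ℓ) ℓ :=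
      (Real.hasDerivAt_exp ℓ).add_const c
    have h3 := (h1.log (by positivity : p * Real.exp ℓ + m ≠ 0)).sub
      (h2.log (by positivity : Real.exp ℓ + c ≠ 0))
    have h4 := h3.const_mul (d : ℝ)
    convert h4 using 1
    · rfl
    · rfl
    · rfl
    rw [hw]
    simp only
    rw [neg_eq_iff_eq_neg]
    field_simp
    ring
  have hHval : ∀ x : ℝ, 0 < x → H (Real.log x) = Real.log (f x) := by
    intro x hx
    rw [hH]
    simp only [Real.exp_log hx]
    rw [hf x, Real.log_pow, Real.log_div (by positivity) (by positivity)]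
  have hexpH : ∀ ℓ : ℝ, Real.exp (H ℓ) = f (Real.exp ℓ) := by
    intro ℓ
    have h1 : H ℓ = Real.log (f (Real.exp ℓ)) := by
      conv_lhs => rw [show ℓ = Real.log (Real.exp ℓ) from (Real.log_exp ℓ).symm]
      exact hHval _ (Real.exp_pos ℓ)
    rw [h1, Real.exp_log (hfpos _ (Real.exp_pos ℓ))]
  set G : ℝ → ℝ := fun ℓ => H (H ℓ) - ℓ with hG
  have hGderiv : ∀ ℓ : ℝ, HasDerivAt G (w (Real.exp ℓ) * w (f (Real.exp ℓ)) - 1) ℓ := by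
    intro ℓ
    have h1 : HasDerivAt (fun t => H (H t)) (-(w (Real.exp (H ℓ))) * -(w (Real.exp ℓ))) ℓ :=
      (hHderiv (H ℓ)).comp ℓ (hHderiv ℓ)
    have h2 := h1.sub (hasDerivAt_id ℓ)
    convert h2 using 1
    · rfl
    · rfl
    · rfl
    rw [hexpH ℓ]
    ring
  have hGanti : StrictAntiOn G (Set.Ici (0 : ℝ)) := by
    apply strictAntiOn_of_deriv_neg (convex_Ici 0)
    · exact fun x _ => (hGderiv x).differentiableAt.continuousAt.continuousWithinAt
    · intro x hx
      rw [interior_Ici] at hx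
      rw [(hGderiv x).deriv]
      have : 1 < Real.exp x := by
        rw [show (1:ℝ) = Real.exp 0 from (Real.exp_zero).symm]
        exact Real.exp_lt_exp.2 hx
      linarith [hwprod (Real.exp x) this]
  -- G 0 = 0
  have hH0 : H 0 = 0 := by
    rw [hH]
    simp only [Real.exp_zero]
    rw [show p * 1 + m = 1 + c by rw [hc]; ring]
    simp
  have hG0 : G 0 = 0 := by rw [hG]; simp [hH0]
  -- conclude
  intro x hx
  have hx0 : 0 < x := by linarith
  have hlog : 0 < Real.log x := Real.log_pos hx
  have h1 : G (Real.log x) < G 0 :=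
    hGanti (Set.self_mem_Ici) (Set.mem_Ici.2 hlog.le) hlog
  rw [hG0] at h1
  have h2 : H (H (Real.log x)) < Real.log x := by
    rw [hG] at h1; simp only at h1; linarith
  rw [hHval x hx0, hHval (f x) (hfpos x hx0)] at h2
  exact (Real.log_lt_log_iff (hfpos _ (hfpos x hx0)) hx0).1 h2
end


theorem rn_tendsto_one (d q : ℕ) (hd : 1 ≤ d) (hq : 2 ≤ q)
    (p : ℝ) (hp0 : 0 < p) (hp1 : p < 1) (hpc : 1 - (q : ℝ) / ((d : ℝ) + 1) ≤ p)
    (f : ℝ → ℝ)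
    (hf : ∀ x : ℝ, f x = ((p * x + ((q : ℝ) - 1)) / (p + ((q : ℝ) - 2) + x)) ^ d)
    (r : ℕ → ℝ) (hr0 : 1 ≤ r 0) (hrec : ∀ n, r (n + 1) = f (r n)) :
    Filter.Tendsto r Filter.atTop (nhds 1) := by
  have hq2 : (2 : ℝ) ≤ (q : ℝ) := by exact_mod_cast hq
  have hm1 : (1 : ℝ) ≤ (q : ℝ) - 1 := by linarith
  have hmdisj : (q : ℝ) - 1 = 1 ∨ 2 ≤ (q : ℝ) - 1 := by
    rcases (by omega : q = 2 ∨ 3 ≤ q) with h | h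
    · left; rw [h]; norm_num
    · right; have : (3 : ℝ) ≤ (q : ℝ) := by exact_mod_cast h
      linarith
  have hcon : (d : ℝ) * (1 - p) ≤ p + ((q : ℝ) - 1) := by
    have hd1 : (0 : ℝ) < (d : ℝ) + 1 := by positivity
    have h2 : 1 - p ≤ (q : ℝ) / ((d : ℝ) + 1) := by linarith
    have h3 := (le_div_iff₀ hd1).1 h2
    nlinarith
  have hf' : ∀ x : ℝ, f x
      = ((p * x + ((q : ℝ) - 1)) / (x + (p + ((q : ℝ) - 1) - 1))) ^ d := by
    intro x
    rw [hf x, show p + ((q : ℝ) - 2) + x = x + (p + ((q : ℝ) - 1) - 1) from by ring]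
  have htwo := two_step d hd p ((q : ℝ) - 1) hp0 hp1 hmdisj hcon f hf'
  -- positivity and range facts
  have hden : ∀ x : ℝ, 0 < x → 0 < x + (p + ((q : ℝ) - 1) - 1) := fun x hx => by linarith
  have hnum : ∀ x : ℝ, 0 < x → 0 < p * x + ((q : ℝ) - 1) := fun x hx => by nlinarith
  have hfpos : ∀ x : ℝ, 0 < x → 0 < f x := fun x hx => by
    rw [hf']; exact pow_pos (div_pos (hnum x hx) (hden x hx)) d
  have hfle1 : ∀ x : ℝ, 1 ≤ x → f x ≤ 1 := by
    intro x hx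
    have hx0 : 0 < x := by linarith
    rw [hf']
    apply pow_le_one₀ (le_of_lt (div_pos (hnum x hx0) (hden x hx0)))
    rw [div_le_one (hden x hx0)]
    nlinarith
  have hfge1 : ∀ x : ℝ, 0 < x → x ≤ 1 → 1 ≤ f x := by
    intro x hx0 hx1
    rw [hf']
    apply one_le_pow₀
    rw [le_div_iff₀ (hden x hx0)]
    nlinarith
  have hf1 : f 1 = 1 := le_antisymm (hfle1 1 le_rfl) (hfge1 1 one_pos le_rfl)
  have hFle : ∀ x : ℝ, 1 ≤ x → f (f x) ≤ x := by
    intro x hx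
    rcases eq_or_lt_of_le hx with h | h
    · rw [← h, hf1, hf1]
    · exact (htwo x h).le
  have hFge1 : ∀ x : ℝ, 1 ≤ x → 1 ≤ f (f x) := fun x hx =>
    hfge1 (f x) (hfpos x (by linarith)) (hfle1 x hx)
  -- the even subsequence
  set s : ℕ → ℝ := fun n => r (2 * n) with hs
  have hs_succ : ∀ n, s (n + 1) = f (f (s n)) := by
    intro n
    show r (2 * (n + 1)) = f (f (r (2 * n)))
    rw [show 2 * (n + 1) = (2 * n + 1) + 1 from by ring, hrec, hrec]
  have hs1 : ∀ n, 1 ≤ s n := by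
    intro n
    induction n with
    | zero => simpa using hr0
    | succ k ih => rw [hs_succ]; exact hFge1 _ ih
  have hsdec : ∀ n, s (n + 1) ≤ s n := fun n => by
    rw [hs_succ]; exact hFle _ (hs1 n)
  have hanti : Antitone s := antitone_nat_of_succ_le hsdec
  have hbdd : BddBelow (Set.range s) := ⟨1, by rintro x ⟨n, rfl⟩; exact hs1 n⟩
  have hlim : Tendsto s atTop (nhds (⨅ n, s n)) := tendsto_atTop_ciInf hanti hbdd
  set L : ℝ := ⨅ n, s n with hL
  have hL1 : 1 ≤ L := le_ciInf hs1
  have hL0 : 0 < L := by linarith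
  -- continuity of f at positive points
  have hfc : ∀ t : ℝ, 0 < t → ContinuousAt f t := by
    intro t ht
    have : ContinuousAt (fun x : ℝ => ((p * x + ((q : ℝ) - 1)) / (x + (p + ((q : ℝ) - 1) - 1))) ^ d) t := by
      apply ContinuousAt.pow
      apply ContinuousAt.div
      · fun_prop
      · fun_prop
      · exact ne_of_gt (hden t ht)
    exact this.congr (by filter_upwards [eventually_gt_nhds ht] with x hx using (hf' x).symm)
  -- fixed point
  have hFL : f (f L) = L := by
    have h1 : Tendsto (fun n => s (n + 1)) atTop (nhds L) :=
      hlim.comp (Filter.tendsto_add_atTop_nat 1)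
    have h2 : Tendsto (fun n => f (f (s n))) atTop (nhds (f (f L))) :=
      ((hfc (f L) (hfpos L hL0)).tendsto.comp ((hfc L hL0).tendsto.comp hlim))
    have h3 : (fun n => s (n + 1)) = fun n => f (f (s n)) := funext hs_succ
    rw [h3] at h1
    exact tendsto_nhds_unique h2 h1
  have hLeq : L = 1 := by
    rcases eq_or_lt_of_le hL1 with h | h
    · exact h.symm
    · have := htwo L h
      rw [hFL] at this
      exact absurd this (lt_irrefl L)
  rw [hLeq] at hlim
  -- odd subsequence
  have hod : Tendsto (fun n => r (2 * n + 1)) atTop (nhds 1) := by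
    have h1 : Tendsto (fun n => f (s n)) atTop (nhds (f 1)) :=
      (hfc 1 one_pos).tendsto.comp hlim
    rw [hf1] at h1
    convert h1 using 2 with n
    exact hrec (2 * n)
  -- combine
  rw [Metric.tendsto_atTop] at hlim hod ⊢
  intro ε hε
  obtain ⟨N1, h1⟩ := hlim ε hε
  obtain ⟨N2, h2⟩ := hod ε hε
  refine ⟨2 * N1 + 2 * N2 + 1, fun n hn => ?_⟩
  rcases Nat.even_or_odd n with ⟨k, hk⟩ | ⟨k, hk⟩
  · have hnk : n = 2 * k := by omega
    rw [hnk]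
    exact h1 k (by omega)
  · rw [hk]
    exact h2 k (by omega)
end

section
/- Define H_m(x) = (B + m(x-1))(B + m(f_m(x)-1)) - B² where B = p+q-1, f_m(x) = ((B + (m-1+p)(x-1))/(B + m(x-1)))^d, p ∈ [1 - q/(d+1), 1) ∩ (0,1), 1 ≤ m ≤ q-1. Then H_m(1) = 0, H_m'(1) = mB(1 - d(1-p)/B), and H_m(x) > 0 and H_m'(x) > 0 for all x > 1. -/
lemma pow_sub_pow_le' {u v : ℝ} (hv : 0 ≤ v) (hvu : v ≤ u) (d : ℕ) :
    u^d - v^d ≤ (d:ℝ)*(u-v)*u^(d-1) := by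
  induction d with
  | zero => simp
  | succ n ih =>
    have hu : 0 ≤ u := le_trans hv hvu
    have hvn : v^n ≤ u^n := pow_le_pow_left₀ hv hvu n
    rcases Nat.eq_zero_or_pos n with h0 | h1
    · subst h0; simp
    · have hun : u^(n-1) * u = u^n := by rw [← pow_succ]; congr 1; omega
      have key : u*(u^n - v^n) ≤ (n:ℝ)*(u-v)*u^n := by
        calc u*(u^n - v^n) ≤ u*((n:ℝ)*(u-v)*u^(n-1)) := mul_le_mul_of_nonneg_left ih hu
        _ = (n:ℝ)*(u-v)*u^n := by rw [← hun]; ring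
      simp only [Nat.add_sub_cancel]
      push_cast
      have h2 : v^n*(u-v) ≤ u^n*(u-v) := mul_le_mul_of_nonneg_right hvn (by linarith)
      rw [pow_succ, pow_succ]
      nlinarith [key, h2]

lemma pow_sub_pow_lt' {u v : ℝ} (hv : 0 ≤ v) (hvu : v < u) {d : ℕ} (hd2 : 2 ≤ d) :
    u^d - v^d < (d:ℝ)*(u-v)*u^(d-1) := by
  have hu : 0 < u := lt_of_le_of_lt hv hvu
  induction d, hd2 using Nat.le_induction with
  | base => norm_num; nlinarith
  | succ n hn ih =>
    have hvn : v^n ≤ u^n := pow_le_pow_left₀ hv hvu.le n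
    have hun : u^(n-1) * u = u^n := by rw [← pow_succ]; congr 1; omega
    have key : u*(u^n - v^n) < (n:ℝ)*(u-v)*u^n := by
      calc u*(u^n - v^n) < u*((n:ℝ)*(u-v)*u^(n-1)) := by exact mul_lt_mul_of_pos_left ih hu
      _ = (n:ℝ)*(u-v)*u^n := by rw [← hun]; ring
    simp only [Nat.add_sub_cancel]
    push_cast
    have h2 : v^n*(u-v) ≤ u^n*(u-v) := mul_le_mul_of_nonneg_right hvn (by linarith)
    rw [pow_succ, pow_succ]
    nlinarith [key, h2]

set_option maxHeartbeats 1600000 in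
theorem Hm_properties (d q m : ℕ) (hd : 1 ≤ d) (hq : 2 ≤ q)
    (hm1 : 1 ≤ m) (hmq : m ≤ q - 1)
    (p : ℝ) (hp0 : 0 < p) (hp1 : p < 1) (hpc : 1 - (q : ℝ) / ((d : ℝ) + 1) ≤ p)
    (B : ℝ) (hB : B = p + (q : ℝ) - 1)
    (fm H : ℝ → ℝ)
    (hfm : ∀ x : ℝ, fm x =
      ((B + ((m : ℝ) - 1 + p) * (x - 1)) / (B + (m : ℝ) * (x - 1))) ^ d)
    (hH : ∀ x : ℝ, H x =
      (B + (m : ℝ) * (x - 1)) * (B + (m : ℝ) * (fm x - 1)) - B ^ 2) :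
    H 1 = 0 ∧ deriv H 1 = (m : ℝ) * B * (1 - (d : ℝ) * (1 - p) / B) ∧
      (∀ x : ℝ, 1 < x → 0 < H x ∧ 0 < deriv H x) := by
  have hqR : (2:ℝ) ≤ (q:ℝ) := by exact_mod_cast hq
  have hmR : (1:ℝ) ≤ (m:ℝ) := by exact_mod_cast hm1
  have hdR : (1:ℝ) ≤ (d:ℝ) := by exact_mod_cast hd
  have hB0 : 0 < B := by rw [hB]; linarith
  have hA_le : (d:ℝ)*(1-p) ≤ B := by
    have hd1 : (0:ℝ) < (d:ℝ)+1 := by linarith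
    have h1 : 1 - p ≤ (q:ℝ)/((d:ℝ)+1) := by linarith
    have h2 : (1-p)*((d:ℝ)+1) ≤ (q:ℝ) := (le_div_iff₀ hd1).mp h1
    rw [hB]; nlinarith
  have hA1 : 1 - p < B := by rw [hB]; linarith
  -- explicit form of H
  have Heq : H = fun x : ℝ => (B + (m : ℝ) * (x - 1)) *
      (B + (m : ℝ) * (((B + ((m : ℝ) - 1 + p) * (x - 1)) / (B + (m : ℝ) * (x - 1))) ^ d - 1)) - B ^ 2 := by
    funext x; rw [hH x, hfm x]
  -- derivative formula
  have hderiv : ∀ x : ℝ, B + (m:ℝ)*(x-1) ≠ 0 → deriv H x =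
      (m:ℝ) * (B + (m:ℝ)*(((B + ((m:ℝ)-1+p)*(x-1))/(B + (m:ℝ)*(x-1)))^d - 1)) +
      (B + (m:ℝ)*(x-1)) * ((m:ℝ) * ((d:ℝ) * ((B + ((m:ℝ)-1+p)*(x-1))/(B + (m:ℝ)*(x-1)))^(d-1) *
        ((((m:ℝ)-1+p) * (B + (m:ℝ)*(x-1)) - (B + ((m:ℝ)-1+p)*(x-1)) * (m:ℝ)) / (B + (m:ℝ)*(x-1))^2))) := by
    intro x hx
    have hu : HasDerivAt (fun y:ℝ => B + (m:ℝ)*(y-1)) (m:ℝ) x := by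
      simpa using (((hasDerivAt_id x).sub_const 1).const_mul ((m:ℝ))).const_add B
    have hv : HasDerivAt (fun y:ℝ => B + ((m:ℝ)-1+p)*(y-1)) ((m:ℝ)-1+p) x := by
      simpa using (((hasDerivAt_id x).sub_const 1).const_mul (((m:ℝ)-1+p))).const_add B
    have hg := hv.div hu hx
    have hgd := hg.pow d
    have hG := ((hgd.sub_const (1:ℝ)).const_mul ((m:ℝ))).const_add B
    have hfin := (hu.mul hG).sub_const (B^2)
    rw [Heq]
    exact hfin.deriv
  refine ⟨?_, ?_, ?_⟩
  · -- H 1 = 0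
    rw [hH 1, hfm 1]
    simp [div_self hB0.ne']
    ring
  · -- deriv H 1
    have h1 := hderiv 1 (by simpa using hB0.ne')
    rw [h1]
    simp only [sub_self, mul_zero, add_zero, div_self hB0.ne', one_pow]
    field_simp
    ring
  · -- x > 1
    intro x hx
    have ht : 0 < x - 1 := by linarith
    have hmt : 0 ≤ (m:ℝ)*(x-1) := by positivity
    have hu0 : 0 < B + (m:ℝ)*(x-1) := by linarith
    have hv0 : 0 < B + ((m:ℝ)-1+p)*(x-1) := by nlinarith
    have huv : B + ((m:ℝ)-1+p)*(x-1) < B + (m:ℝ)*(x-1) := by nlinarith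
    set u : ℝ := B + (m:ℝ)*(x-1) with hu_def
    set v : ℝ := B + ((m:ℝ)-1+p)*(x-1) with hv_def
    have F1 : u^d - v^d ≤ (d:ℝ)*(u-v)*u^(d-1) := pow_sub_pow_le' hv0.le huv.le d
    have hud : u^(d-1) * u = u^d := by rw [← pow_succ]; congr 1; omega
    have hwu : (v/u)^d * u^d = v^d := by
      rw [div_pow, div_mul_cancel₀ _ (pow_ne_zero _ hu0.ne')]
    have hsu : (v/u)^(d-1) * u^(d-1) = v^(d-1) := by
      rw [div_pow, div_mul_cancel₀ _ (pow_ne_zero _ hu0.ne')]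
    have huvt : u - v = (1-p)*(x-1) := by rw [hu_def, hv_def]; ring
    have hupow : 0 < u^(d-1) := pow_pos hu0 _
    clear_value u v
    -- key bound: (1 - (v/u)^d) * u ≤ d(1-p)(x-1), strict if 2 ≤ d
    have claim : (1 - (v/u)^d)*u ≤ (d:ℝ)*(1-p)*(x-1) := by
      have h1 : ((1 - (v/u)^d)*u) * u^(d-1) ≤ ((d:ℝ)*(1-p)*(x-1)) * u^(d-1) := by
        calc ((1 - (v/u)^d)*u) * u^(d-1) = u^d - (v/u)^d * u^d := by rw [← hud]; ring
        _ = u^d - v^d := by rw [hwu]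
        _ ≤ (d:ℝ)*(u-v)*u^(d-1) := F1
        _ = ((d:ℝ)*(1-p)*(x-1)) * u^(d-1) := by rw [huvt]; ring
      exact le_of_mul_le_mul_right h1 hupow
    have claim' : 2 ≤ d → (1 - (v/u)^d)*u < (d:ℝ)*(1-p)*(x-1) := by
      intro hd2
      have F1' : u^d - v^d < (d:ℝ)*(u-v)*u^(d-1) := pow_sub_pow_lt' hv0.le huv hd2
      have h1 : ((1 - (v/u)^d)*u) * u^(d-1) < ((d:ℝ)*(1-p)*(x-1)) * u^(d-1) := by
        calc ((1 - (v/u)^d)*u) * u^(d-1) = u^d - (v/u)^d * u^d := by rw [← hud]; ring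
        _ = u^d - v^d := by rw [hwu]
        _ < (d:ℝ)*(u-v)*u^(d-1) := F1'
        _ = ((d:ℝ)*(1-p)*(x-1)) * u^(d-1) := by rw [huvt]; ring
      exact lt_of_mul_lt_mul_right h1 hupow.le
    constructor
    · -- 0 < H x
      rw [hH x, hfm x, ← hu_def, ← hv_def]
      have hgoal : 0 < (m:ℝ) * (B*(x-1) - (1 - (v/u)^d)*u) := by
        rcases eq_or_lt_of_le hd with hd1 | hd2
        · have hA' : (d:ℝ)*(1-p) = 1-p := by rw [← hd1]; norm_num
          have : (1 - (v/u)^d)*u ≤ (1-p)*(x-1) := by rw [← hA']; exact claim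
          have hpos : 0 < B*(x-1) - (1 - (v/u)^d)*u := by nlinarith
          exact mul_pos (by linarith) hpos
        · have hd2' : 2 ≤ d := hd2
          have hc := claim' hd2'
          have hpos : 0 < B*(x-1) - (1 - (v/u)^d)*u := by nlinarith
          exact mul_pos (by linarith) hpos
      calc (0:ℝ) < (m:ℝ) * (B*(x-1) - (1 - (v/u)^d)*u) := hgoal
      _ = u * (B + (m:ℝ)*((v/u)^d - 1)) - B^2 := by linear_combination (-B) * hu_def
    · -- 0 < deriv H x
      have hne : B + (m:ℝ)*(x-1) ≠ 0 := by rw [← hu_def]; exact hu0.ne'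
      rw [hderiv x hne, ← hu_def, ← hv_def]
      have hnum : ((m:ℝ)-1+p)*u - v*(m:ℝ) = B*(p-1) := by rw [hu_def, hv_def]; ring
      rw [hnum]
      set W : ℝ := (v/u)^d with hW
      set S : ℝ := (v/u)^(d-1) with hS
      clear_value W S
      have hsplit : (m:ℝ)*(B + (m:ℝ)*(W-1)) + u*((m:ℝ)*((d:ℝ)*S*(B*(p-1)/u^2)))
          = ((m:ℝ)/u) * ((B + (m:ℝ)*(W-1))*u - (d:ℝ)*S*B*(1-p)) := by
        field_simp
        ring
      rw [hsplit]
      have hG : 0 < (B + (m:ℝ)*(W-1))*u - (d:ℝ)*S*B*(1-p) := by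
        have hmain : 0 < ((B + (m:ℝ)*(W-1))*u - (d:ℝ)*S*B*(1-p)) * u^(d-1) := by
          have heq1 : ((B + (m:ℝ)*(W-1))*u - (d:ℝ)*S*B*(1-p)) * u^(d-1)
              = B*u^d + (m:ℝ)*(v^d - u^d) - (d:ℝ)*(1-p)*B*v^(d-1) := by
            linear_combination (B + (m:ℝ)*W - (m:ℝ)) * hud + (m:ℝ) * hwu - (d:ℝ)*(1-p)*B * hsu
          rw [heq1]
          have hF1m : (m:ℝ)*(u^d - v^d) ≤ (m:ℝ)*((d:ℝ)*(u-v)*u^(d-1)) :=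
            mul_le_mul_of_nonneg_left F1 (by linarith)
          have hmuv : (m:ℝ)*((d:ℝ)*(u-v)*u^(d-1)) = (d:ℝ)*(1-p)*(u - B)*u^(d-1) := by
            have h4 : (m:ℝ)*(u-v) = (1-p)*(u-B) := by rw [hu_def, hv_def]; ring
            linear_combination (d:ℝ)*u^(d-1) * h4
          -- lower bound: (B - A) u^d + A B (u^(d-1) - v^(d-1))
          have hlow : B*u^d + (m:ℝ)*(v^d - u^d) - (d:ℝ)*(1-p)*B*v^(d-1)
              ≥ (B - (d:ℝ)*(1-p))*u^d + (d:ℝ)*(1-p)*B*(u^(d-1) - v^(d-1)) := by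
            have h3 : (d:ℝ)*(1-p)*(u-B)*u^(d-1) = (d:ℝ)*(1-p)*u^d - (d:ℝ)*(1-p)*B*u^(d-1) := by
              rw [← hud]; ring
            nlinarith [hF1m, hmuv]
          rcases eq_or_lt_of_le hd with hd1 | hd2
          · have hd1' : d - 1 = 0 := by omega
            have hu1 : u^(d-1) = 1 := by rw [hd1']; norm_num
            have hv1 : v^(d-1) = 1 := by rw [hd1']; norm_num
            have hAlt : (d:ℝ)*(1-p) < B := by
              have hdc : (d:ℝ) = 1 := by exact_mod_cast hd1.symm
              rw [hdc]; linarith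
            have hud0 : 0 < u^d := pow_pos hu0 d
            rw [hu1, hv1] at hlow
            rw [hv1]
            nlinarith [hlow, mul_pos (sub_pos.mpr hAlt) hud0]
          · have hd2' : 2 ≤ d := hd2
            have hvd : v^(d-1) < u^(d-1) := by
              apply pow_lt_pow_left₀ huv hv0.le
              omega
            have hA0 : 0 < (d:ℝ)*(1-p) := by nlinarith
            have hud0 : 0 < u^d := pow_pos hu0 d
            nlinarith [hlow, mul_pos (mul_pos hA0 hB0) (sub_pos.mpr hvd)]
        rcases mul_pos_iff.mp hmain with ⟨h, _⟩ | ⟨_, h⟩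
        · exact h
        · linarith
      exact mul_pos (div_pos (by linarith) hu0) hG
end

section
/- With H_m and K_m as above (p ∈ [1 - q/(d+1), 1) ∩ (0,1), 1 ≤ m ≤ q-1, d ≥ 1), for all x > 1 one has (d-1)·K_m'(x) + 2·H_m'(x) > 0. -/
lemma poly_pos (e : ℕ) (c ε B t C0 C1 C2 C3 : ℝ)
    (hε : 0 < ε) (hc : 0 < c)
    (hBc : ((e:ℝ) + 1) * ε ≤ B) (hεB : ε < B)
    (ht0 : 0 < t) (ht1 : t < 1) (htc : c < (c + ε) * t)
    (hC0 : C0 = (((e:ℝ)+2)*(c+ε) - (e:ℝ)*c)*B - ((e:ℝ)+2)*(c+ε)*(c+ε) + (e:ℝ)*c*c)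
    (hC1 : C1 = ((e:ℝ)+1)*(((e:ℝ)+2)*(c+ε))*c)
    (hC2 : C2 = ((e:ℝ)+2)*(c+ε)*(c+ε) - (e:ℝ)*c*c + ((e:ℝ)+1)*((e:ℝ)*c)*ε
              - ((e:ℝ)+1)*(c+ε)*((e:ℝ)*c) - ((e:ℝ)+1)*(c+ε)*(((e:ℝ)+2)*(c+ε)))
    (hC3 : C3 = ((e:ℝ)+1)*(c+ε)*((e:ℝ)*c)) :
    0 < C0 + C1 * t^e + C2 * t^(e+1) + C3 * t^(e+2) := by
  rcases e with _ | f
  · subst hC0 hC1 hC2 hC3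
    norm_num
    nlinarith [mul_pos (show (0:ℝ) < c + ε by linarith) (show (0:ℝ) < B - ε by linarith),
      ht0, ht1, sq_nonneg t]
  · have hf : (0:ℝ) ≤ (f:ℝ) := Nat.cast_nonneg f
    push_cast at hC0 hC1 hC2 hC3 hBc ⊢
    set ψ : ℝ → ℝ := fun s => C1*s^(f+1) + C2*s^(f+2) + C3*s^(f+3) with hψ
    have hanti : StrictAntiOn ψ (Set.Icc t 1) := by
      apply strictAntiOn_of_deriv_neg (convex_Icc t 1)
      · fun_prop
      · intro s hs
        rw [interior_Icc] at hs
        have hds : HasDerivAt ψ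
            (C1*(((f:ℝ)+1)*s^f) + C2*(((f:ℝ)+2)*s^(f+1)) + C3*(((f:ℝ)+3)*s^(f+2))) s := by
          have h1 := (hasDerivAt_pow (f+1) s).const_mul C1
          have h2 := (hasDerivAt_pow (f+2) s).const_mul C2
          have h3 := (hasDerivAt_pow (f+3) s).const_mul C3
          simp only [Nat.add_sub_cancel] at h1 h2 h3
          push_cast at h1 h2 h3
          exact (h1.add h2).add h3
        rw [hds.deriv]
        have hs0 : 0 < s := lt_trans ht0 hs.1
        have hP : 0 < (c+ε)*s - c := by nlinarith [hs.1]
        have hN : c*(s-1) - ε < 0 := by nlinarith [hs.2]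
        have hfac : C1*(((f:ℝ)+1)*s^f) + C2*(((f:ℝ)+2)*s^(f+1)) + C3*(((f:ℝ)+3)*s^(f+2))
            = (s^f * ((((f:ℝ)+2)*(((f:ℝ)+2)^2 - 1)) * ((c+ε)*s - c))) * (c*(s-1) - ε) := by
          rw [hC1, hC2, hC3]; ring
        rw [hfac]
        apply mul_neg_of_pos_of_neg _ hN
        have hD : 0 < ((f:ℝ)+2)*(((f:ℝ)+2)^2 - 1) := by nlinarith
        exact mul_pos (pow_pos hs0 f) (mul_pos hD hP)
    have h21 : ψ 1 < ψ t :=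
      hanti (Set.left_mem_Icc.2 ht1.le) (Set.right_mem_Icc.2 ht1.le) ht1
    have hψ1 : ψ 1 = C1 + C2 + C3 := by simp [hψ]
    have hE1 : 0 ≤ C0 + (C1 + C2 + C3) := by
      rw [hC0, hC1, hC2, hC3]
      nlinarith [mul_nonneg (show (0:ℝ) ≤ 2*c + ((f:ℝ)+3)*ε by nlinarith)
        (show (0:ℝ) ≤ B - ((f:ℝ)+2)*ε by linarith)]
    have hψt : ψ t = C1*t^(f+1) + C2*t^(f+2) + C3*t^(f+3) := rfl
    rw [hψ1] at h21
    rw [hψt] at h21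
    have : t^(f+1+1) = t^(f+2) := by ring
    rw [this]
    have : t^(f+1+2) = t^(f+3) := by ring
    rw [this]
    linarith

set_option maxHeartbeats 2000000 in
theorem HK_deriv_combination_pos (d q m : ℕ) (hd : 1 ≤ d) (hq : 2 ≤ q)
    (hm1 : 1 ≤ m) (hmq : m ≤ q - 1)
    (p : ℝ) (hp0 : 0 < p) (hp1 : p < 1) (hpc : 1 - (q : ℝ) / ((d : ℝ) + 1) ≤ p)
    (B : ℝ) (hB : B = p + (q : ℝ) - 1)
    (fm H K : ℝ → ℝ)
    (hfm : ∀ x : ℝ, fm x =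
      ((B + ((m : ℝ) - 1 + p) * (x - 1)) / (B + (m : ℝ) * (x - 1))) ^ d)
    (hH : ∀ x : ℝ, H x =
      (B + (m : ℝ) * (x - 1)) * (B + (m : ℝ) * (fm x - 1)) - B ^ 2)
    (hK : ∀ x : ℝ, K x =
      (B + (m : ℝ) * (x - 1)) * (B + (m : ℝ) * (fm x - 1)) -
        (B + ((m : ℝ) - 1 + p) * (x - 1)) * (B + ((m : ℝ) - 1 + p) * (fm x - 1))) :
    ∀ x : ℝ, 1 < x → 0 < ((d : ℝ) - 1) * deriv K x + 2 * deriv H x := by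
  intro x hx
  obtain ⟨e, rfl⟩ : ∃ e, d = e + 1 := ⟨d - 1, (Nat.succ_pred_eq_of_pos hd).symm⟩
  have hm' : (1:ℝ) ≤ (m:ℝ) := by exact_mod_cast hm1
  have hq' : (2:ℝ) ≤ (q:ℝ) := by exact_mod_cast hq
  have hB0 : 0 < B := by rw [hB]; linarith
  have hu0 : 0 < B + (m:ℝ)*(x-1) := by nlinarith
  have hune : B + (m:ℝ)*(x-1) ≠ 0 := ne_of_gt hu0
  have hc0 : 0 < (m:ℝ) - 1 + p := by linarith
  have hv0 : 0 < B + ((m:ℝ)-1+p)*(x-1) := by nlinarith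
  -- derivatives of the linear parts
  have hA : HasDerivAt (fun y : ℝ => B + (m:ℝ)*(y-1)) (m:ℝ) x := by
    simpa using (((hasDerivAt_id x).sub_const 1).const_mul (m:ℝ)).const_add B
  have hC : HasDerivAt (fun y : ℝ => B + ((m:ℝ)-1+p)*(y-1)) ((m:ℝ)-1+p) x := by
    simpa using (((hasDerivAt_id x).sub_const 1).const_mul ((m:ℝ)-1+p)).const_add B
  have hg : HasDerivAt (fun y : ℝ => (B + ((m:ℝ)-1+p)*(y-1)) / (B + (m:ℝ)*(y-1)))
      ((((m:ℝ)-1+p) * (B + (m:ℝ)*(x-1)) - (B + ((m:ℝ)-1+p)*(x-1)) * (m:ℝ))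
        / (B + (m:ℝ)*(x-1))^2) x := hC.div hA hune
  have hfme : fm = fun y => ((B + ((m:ℝ)-1+p)*(y-1)) / (B + (m:ℝ)*(y-1)))^(e+1) :=
    funext hfm
  have hfd : HasDerivAt fm
      (((e:ℝ)+1) * ((B + ((m:ℝ)-1+p)*(x-1)) / (B + (m:ℝ)*(x-1)))^e *
        ((((m:ℝ)-1+p) * (B + (m:ℝ)*(x-1)) - (B + ((m:ℝ)-1+p)*(x-1)) * (m:ℝ))
          / (B + (m:ℝ)*(x-1))^2)) x := by
    rw [hfme]
    have h := hg.pow (e+1)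
    simp only [Nat.add_sub_cancel] at h
    push_cast at h
    exact h
  set F : ℝ := ((e:ℝ)+1) * ((B + ((m:ℝ)-1+p)*(x-1)) / (B + (m:ℝ)*(x-1)))^e *
        ((((m:ℝ)-1+p) * (B + (m:ℝ)*(x-1)) - (B + ((m:ℝ)-1+p)*(x-1)) * (m:ℝ))
          / (B + (m:ℝ)*(x-1))^2) with hF
  have hHd : HasDerivAt H
      ((m:ℝ) * (B + (m:ℝ)*(fm x - 1)) + (B + (m:ℝ)*(x-1)) * ((m:ℝ) * F)) x := by
    rw [show H = (fun y => (B + (m:ℝ)*(y-1)) * (B + (m:ℝ)*(fm y - 1)) - B^2)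
      from funext hH]
    exact (hA.mul (((hfd.sub_const 1).const_mul (m:ℝ)).const_add B)).sub_const (B^2)
  have hKd : HasDerivAt K
      (((m:ℝ) * (B + (m:ℝ)*(fm x - 1)) + (B + (m:ℝ)*(x-1)) * ((m:ℝ) * F)) -
       (((m:ℝ)-1+p) * (B + ((m:ℝ)-1+p)*(fm x - 1)) +
         (B + ((m:ℝ)-1+p)*(x-1)) * (((m:ℝ)-1+p) * F))) x := by
    rw [show K = (fun y => (B + (m:ℝ)*(y-1)) * (B + (m:ℝ)*(fm y - 1)) -
        (B + ((m:ℝ)-1+p)*(y-1)) * (B + ((m:ℝ)-1+p)*(fm y - 1))) from funext hK]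
    exact (hA.mul (((hfd.sub_const 1).const_mul (m:ℝ)).const_add B)).sub
      (hC.mul (((hfd.sub_const 1).const_mul ((m:ℝ)-1+p)).const_add B))
  rw [hKd.deriv, hHd.deriv, hfm x]
  -- hypotheses for the key polynomial inequality
  have hε : (0:ℝ) < 1 - p := by linarith
  have hBc : ((e:ℝ)+1) * (1-p) ≤ B := by
    push_cast at hpc
    have h2 : (0:ℝ) < (e:ℝ) + 1 + 1 := by positivity
    have h3 : (1 - p) * ((e:ℝ) + 1 + 1) ≤ (q:ℝ) := by
      rw [← le_div_iff₀ h2]; linarith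
    nlinarith
  have hεB : 1 - p < B := by rw [hB]; linarith
  have ht0 : 0 < (B + ((m:ℝ)-1+p)*(x-1)) / (B + (m:ℝ)*(x-1)) := div_pos hv0 hu0
  have ht1 : (B + ((m:ℝ)-1+p)*(x-1)) / (B + (m:ℝ)*(x-1)) < 1 := by
    rw [div_lt_one hu0]; nlinarith
  have htc : ((m:ℝ)-1+p) < (((m:ℝ)-1+p) + (1-p)) *
      ((B + ((m:ℝ)-1+p)*(x-1)) / (B + (m:ℝ)*(x-1))) := by
    rw [← mul_div_assoc, lt_div_iff₀ hu0]
    nlinarith [mul_pos hε hB0]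
  have key := poly_pos e ((m:ℝ)-1+p) (1-p) B
    ((B + ((m:ℝ)-1+p)*(x-1)) / (B + (m:ℝ)*(x-1))) _ _ _ _
    hε hc0 hBc hεB ht0 ht1 htc rfl rfl rfl rfl
  refine lt_of_lt_of_eq key ?_
  rw [hF]
  push_cast
  simp only [div_pow]
  field_simp
  ring
end
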